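/- arXiv:1401.2052 — 5 statements merged into one kernel-verified Lean document; each statement's English description precedes it below -/
import Mathlib

section
/- Let R be a ring and M a right R-module. An endomorphism φ of M is a strongly clean element of the endomorphism ring End_R(M) if and only if there exist submodules A and B of M such that M is the internal direct sum A ⊕ B, φ(A) ⊆ A, φ(B) ⊆ B, the restriction of φ to A is an automorphism of A, and the restriction of 1 − φ to B is an automorphism of B. -/
/-!
Writing `φ = e + u`, the idempotent `e` commutes with `φ` exactly when `ker e` and `range e` are
`φ`-invariant; on `ker e` the map `φ` agrees with the unit `u`, and on `range e` the map `1 - φ`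
agrees with `-u`. Conversely, the projection `e` onto `B` along `A` commutes with `φ`, and
`φ - e` is `φ` on `A` and `-(1 - φ)` on `B`, hence bijective.
-/

/-- An element of a ring is *strongly clean* if it is the sum of an idempotent and a unit
that commute with each other. -/
def IsStronglyClean {S : Type*} [Ring S] (a : S) : Prop :=
  ∃ e u : S, IsIdempotentElem e ∧ IsUnit u ∧ a = e + u ∧ e * u = u * e

open LinearMap Set

theorem isStronglyClean_iff_exists_isIdempotentElem {S : Type*} [Ring S] {a : S} :
    IsStronglyClean a ↔ ∃ e : S, IsIdempotentElem e ∧ Commute e a ∧ IsUnit (a - e) := by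
  constructor
  · rintro ⟨e, u, he, hu, rfl, hcomm⟩
    exact ⟨e, he, (Commute.refl e).add_right hcomm, by rwa [add_sub_cancel_left]⟩
  · rintro ⟨e, he, hcomm, hu⟩
    exact ⟨e, a - e, he, hu, (add_sub_cancel e a).symm, (hcomm.sub_right (Commute.refl e)).eq⟩

section

variable {R M : Type*} [Ring R] [AddCommGroup M] [Module R M]

theorem Submodule.bijOn_of_map_eq {f : M →ₗ[R] M} (hf : Function.Injective f)
    {p : Submodule R M} (h : p.map f = p) : BijOn f p p := by
  simpa [← Submodule.map_coe, h] using hf.injOn.bijOn_image (s := (p : Set M))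

theorem LinearMap.IsIdempotentElem.bijOn_ker_of_commute {e T : Module.End R M}
    (he : IsIdempotentElem e) (hT : IsUnit T) (hcomm : Commute e T) :
    BijOn T (ker e) (ker e) :=
  Submodule.bijOn_of_map_eq ((Module.End.isUnit_iff T).1 hT).1
    ((IsIdempotentElem.commute_iff_of_isUnit hT he).1 hcomm).2

theorem LinearMap.IsIdempotentElem.bijOn_range_of_commute {e T : Module.End R M}
    (he : IsIdempotentElem e) (hT : IsUnit T) (hcomm : Commute e T) :
    BijOn T (range e) (range e) :=
  Submodule.bijOn_of_map_eq ((Module.End.isUnit_iff T).1 hT).1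
    ((IsIdempotentElem.commute_iff_of_isUnit hT he).1 hcomm).1

theorem Submodule.bijOn_neg_of_bijOn {f : M →ₗ[R] M} {p : Submodule R M} (h : BijOn f p p) :
    BijOn (-f) p p := by
  refine ⟨fun x hx ↦ p.neg_mem (h.mapsTo hx), fun x hx y hy hxy ↦ h.injOn hx hy (neg_inj.1 hxy),
    fun y hy ↦ ?_⟩
  obtain ⟨x, hx, hxy⟩ := h.surjOn (p.neg_mem hy)
  exact ⟨x, hx, by simp [hxy]⟩

theorem LinearMap.bijective_of_isCompl_of_bijOn {f : M →ₗ[R] M} {A B : Submodule R M}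
    (hAB : IsCompl A B) (hA : BijOn f A A) (hB : BijOn f B B) : Function.Bijective f := by
  constructor
  · rw [← ker_eq_bot, Submodule.eq_bot_iff]
    intro x hx
    have hx' : x ∈ A ⊔ B := hAB.sup_eq_top ▸ Submodule.mem_top
    obtain ⟨a, ha, b, hb, rfl⟩ := Submodule.mem_sup.1 hx'
    have hfab : f a = -f b := eq_neg_of_add_eq_zero_left (by rwa [mem_ker, map_add] at hx)
    have hfa : f a = 0 := Submodule.disjoint_def.1 hAB.disjoint _ (hA.mapsTo ha)
      (hfab ▸ B.neg_mem (hB.mapsTo hb))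
    have hfb : f b = 0 := neg_eq_zero.1 (hfab ▸ hfa)
    rw [hA.injOn ha A.zero_mem (hfa.trans (map_zero f).symm),
      hB.injOn hb B.zero_mem (hfb.trans (map_zero f).symm), add_zero]
  · have hle : ∀ {p : Submodule R M}, BijOn f p p → p ≤ range f := fun hp y hy ↦
      let ⟨x, _, hx⟩ := hp.surjOn hy; ⟨x, hx⟩
    rw [← range_eq_top, eq_top_iff, ← hAB.sup_eq_top]
    exact sup_le (hle hA) (hle hB)

theorem exists_isCompl_of_isIdempotentElem {φ e : Module.End R M} (he : IsIdempotentElem e)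
    (hcomm : Commute e φ) (hu : IsUnit (φ - e)) :
    ∃ A B : Submodule R M, IsCompl A B ∧ MapsTo φ A A ∧ MapsTo φ B B ∧
      BijOn φ A A ∧ BijOn (⇑(1 - φ)) B B := by
  have hinvt := (IsIdempotentElem.commute_iff he).1 hcomm
  have hcomm' : Commute e (φ - e) := hcomm.sub_right (Commute.refl e)
  refine ⟨ker e, range e, he.isCompl.symm, hinvt.2, hinvt.1, ?_, ?_⟩
  · exact (he.bijOn_ker_of_commute hu hcomm').congr fun x hx ↦ by simp [mem_ker.1 hx]
  · exact (he.bijOn_range_of_commute hu.neg hcomm'.neg_right).congr fun x hx ↦ by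
      simp [he.mem_range_iff.1 hx]

theorem exists_isIdempotentElem_of_isCompl {φ : Module.End R M} {A B : Submodule R M}
    (hAB : IsCompl A B) (hB : MapsTo φ B B) (hφA : BijOn φ A A) (hφB : BijOn (⇑(1 - φ)) B B) :
    ∃ e : Module.End R M, IsIdempotentElem e ∧ Commute e φ ∧ IsUnit (φ - e) := by
  have he := Submodule.isIdempotentElem_projection hAB.symm
  refine ⟨B.projection A hAB.symm, he, ?_, (Module.End.isUnit_iff _).2 ?_⟩
  · rw [IsIdempotentElem.commute_iff he, Submodule.range_projection, Submodule.ker_projection]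
    exact ⟨hB, hφA.mapsTo⟩
  · refine bijective_of_isCompl_of_bijOn hAB (hφA.congr fun x hx ↦ ?_)
      ((Submodule.bijOn_neg_of_bijOn hφB).congr fun x hx ↦ ?_)
    · simp [Submodule.projection_apply_of_mem_right hAB.symm hx]
    · simp [Submodule.projection_apply_of_mem_left hAB.symm hx]

end

/-- Nicholson's lemma: an endomorphism `φ` of a module `M` is strongly clean in `End_R(M)`
iff `M` decomposes as an internal direct sum `A ⊕ B` of `φ`-invariant submodules on which,
respectively, `φ` restricts to an automorphism of `A` and `1 - φ` restricts to an
automorphism of `B`. -/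
theorem stronglyClean_end_iff {R M : Type*} [Ring R] [AddCommGroup M] [Module R M]
    (φ : Module.End R M) :
    IsStronglyClean φ ↔
      ∃ A B : Submodule R M, IsCompl A B ∧
        Set.MapsTo φ (A : Set M) (A : Set M) ∧ Set.MapsTo φ (B : Set M) (B : Set M) ∧
        Set.BijOn φ (A : Set M) (A : Set M) ∧
        Set.BijOn (⇑(1 - φ)) (B : Set M) (B : Set M) := by
  rw [isStronglyClean_iff_exists_isIdempotentElem]
  constructor
  · rintro ⟨e, he, hcomm, hu⟩
    exact exists_isCompl_of_isIdempotentElem he hcomm hu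
  · rintro ⟨A, B, hAB, -, hB, hφA, hφB⟩
    exact exists_isIdempotentElem_of_isCompl hAB hB hφA hφB
end

section
/- Let R be a commutative clean ring, n ≥ 2, and h ∈ R[t] a monic polynomial of degree n. If h has a gSRC-factorization, then h has a gSRC-factorization in which the complete orthogonal set of idempotents e₁, …, e_m satisfies m ≤ n + 1. -/
/-- An SR-factorization of a monic polynomial `f` is a factorization `f = f₀ * f₁` into monic
polynomials with `f₀(0)` and `f₁(1)` units. -/
def HasSRFactorization {R : Type*} [CommRing R] (f : Polynomial R) : Prop :=
  ∃ f₀ f₁ : Polynomial R, f₀.Monic ∧ f₁.Monic ∧ f = f₀ * f₁ ∧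
    IsUnit (f₀.eval 0) ∧ IsUnit (f₁.eval 1)

/-- An SRC-factorization is an SR-factorization `f = f₀ * f₁` in which moreover the ideal
`(f₀, f₁)` is all of `R[t]`, i.e. `f₀ * u + f₁ * v = 1` for some `u, v`. -/
def HasSRCFactorization {R : Type*} [CommRing R] (f : Polynomial R) : Prop :=
  ∃ f₀ f₁ : Polynomial R, f₀.Monic ∧ f₁.Monic ∧ f = f₀ * f₁ ∧
    IsUnit (f₀.eval 0) ∧ IsUnit (f₁.eval 1) ∧ ∃ u v : Polynomial R, f₀ * u + f₁ * v = 1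

/-- A complete orthogonal set of idempotents: finitely many idempotents, pairwise orthogonal,
summing to `1`. -/
def IsCompleteOrthogonalIdempotents {R : Type*} [CommRing R] {k : ℕ} (e : Fin k → R) : Prop :=
  (∀ i, IsIdempotentElem (e i)) ∧ (∀ i j, i ≠ j → e i * e j = 0) ∧ ∑ i, e i = 1

/-- A monic `h ∈ R[t]` has a gSRC-factorization if there is a complete orthogonal set of
idempotents `e₁, …, e_k` such that the image of `h` in `(R/(1-eᵢ))[t]` has an SRC-factorization
for each `i`. -/
def HasGSRCFactorization {R : Type*} [CommRing R] (h : Polynomial R) : Prop :=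
  ∃ (k : ℕ) (e : Fin k → R), IsCompleteOrthogonalIdempotents e ∧
    ∀ i, HasSRCFactorization (h.map (Ideal.Quotient.mk (Ideal.span {1 - e i})))

/-- A ring is *clean* if every element is the sum of an idempotent and a unit. -/
def IsCleanRing (R : Type*) [Ring R] : Prop :=
  ∀ a : R, ∃ e u : R, IsIdempotentElem e ∧ IsUnit u ∧ a = e + u

/-!
Sort the idempotents `eᵢ` by the degree `d ∈ {0, …, n}` of the first factor of the
SRC-factorization over `R ⧸ (1 - eᵢ)` and add up those of each class. For such a sum `E`, the
Chinese remainder theorem gives `R ⧸ (1 - E) ≅ ∏ R ⧸ (1 - eᵢ)`, and the factorizations over the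
factors glue coefficientwise to one over the product: the first factors are monic of the common
degree `d`, so their lift is monic, and then so is the cofactor of the monic polynomial `h`.
-/

open Polynomial

def IsSRCFactorization {R : Type*} [CommRing R] (f f₀ f₁ : R[X]) : Prop :=
  f₀.Monic ∧ f₁.Monic ∧ f = f₀ * f₁ ∧
    IsUnit (f₀.eval 0) ∧ IsUnit (f₁.eval 1) ∧ ∃ u v : R[X], f₀ * u + f₁ * v = 1

theorem hasSRCFactorization_iff {R : Type*} [CommRing R] {f : R[X]} :
    HasSRCFactorization f ↔ ∃ f₀ f₁, IsSRCFactorization f f₀ f₁ :=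
  Iff.rfl

theorem IsSRCFactorization.natDegree_left_le {R : Type*} [CommRing R] {f f₀ f₁ : R[X]}
    (hf : IsSRCFactorization f f₀ f₁) : f₀.natDegree ≤ f.natDegree := by
  obtain ⟨hf₀, hf₁, rfl, -⟩ := hf
  rw [hf₀.natDegree_mul hf₁]
  exact Nat.le_add_right _ _

theorem HasSRCFactorization.map {A B : Type*} [CommRing A] [CommRing B] (φ : A →+* B)
    {f : A[X]} (hf : HasSRCFactorization f) : HasSRCFactorization (f.map φ) := by
  obtain ⟨f₀, f₁, hf₀, hf₁, rfl, hu₀, hu₁, u, v, huv⟩ := hf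
  refine ⟨f₀.map φ, f₁.map φ, hf₀.map φ, hf₁.map φ, Polynomial.map_mul φ, ?_, ?_,
    u.map φ, v.map φ, ?_⟩
  · rw [eval_zero_map]; exact hu₀.map φ
  · rw [eval_one_map]; exact hu₁.map φ
  · rw [← Polynomial.map_mul, ← Polynomial.map_mul, ← Polynomial.map_add, huv,
      Polynomial.map_one]

theorem Polynomial.monic_of_forall_map_evalRingHom {ι : Type*} {B : ι → Type*}
    [∀ i, Semiring (B i)] {p : (∀ i, B i)[X]} {d : ℕ}
    (hp : ∀ i, (p.map (Pi.evalRingHom B i)).Monic)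
    (hd : ∀ i, (p.map (Pi.evalRingHom B i)).natDegree = d) : p.Monic := by
  refine monic_of_natDegree_le_of_coeff_eq_one d ?_ ?_
  · refine natDegree_le_iff_coeff_eq_zero.2 fun m hm => ?_
    ext i
    rw [← hd i] at hm
    simpa using coeff_eq_zero_of_natDegree_lt hm
  · ext i
    have := (hp i).leadingCoeff
    rwa [leadingCoeff, hd i, coeff_map] at this

theorem hasSRCFactorization_of_forall_map_evalRingHom {ι : Type*} [Fintype ι]
    {B : ι → Type*} [∀ i, CommRing (B i)] {g : (∀ i, B i)[X]} (hg : g.Monic)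
    {d : ℕ} {f₀ f₁ : ∀ i, (B i)[X]}
    (hf : ∀ i, IsSRCFactorization (g.map (Pi.evalRingHom B i)) (f₀ i) (f₁ i))
    (hd : ∀ i, (f₀ i).natDegree = d) : HasSRCFactorization g := by
  choose hm₀ _ hfac hu₀ hu₁ u v huv using hf
  let Φ := piEquiv B
  have hΦ : ∀ p i, Φ p i = p.map (Pi.evalRingHom B i) := fun _ _ => rfl
  have hΦsymm : ∀ P i, (Φ.symm P).map (Pi.evalRingHom B i) = P i := fun P i => by
    rw [← hΦ, RingEquiv.apply_symm_apply]
  have hF₀ : (Φ.symm f₀).Monic :=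
    monic_of_forall_map_evalRingHom (d := d) (fun i => hΦsymm f₀ i ▸ hm₀ i)
      (fun i => hΦsymm f₀ i ▸ hd i)
  have hg_eq : g = Φ.symm f₀ * Φ.symm f₁ := Φ.injective <| funext fun i => by
    rw [map_mul, RingEquiv.apply_symm_apply, RingEquiv.apply_symm_apply, Pi.mul_apply, hΦ]
    exact hfac i
  refine ⟨Φ.symm f₀, Φ.symm f₁, hF₀, hF₀.of_mul_monic_left (hg_eq ▸ hg), hg_eq, ?_, ?_,
    Φ.symm u, Φ.symm v, ?_⟩
  · refine Pi.isUnit_iff.2 fun i => ?_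
    have := hu₀ i
    rwa [← hΦsymm f₀ i, eval_zero_map] at this
  · refine Pi.isUnit_iff.2 fun i => ?_
    have := hu₁ i
    rwa [← hΦsymm f₁ i, eval_one_map] at this
  · simp only [← map_mul, ← map_add, Φ.symm_apply_eq, map_one]
    exact funext huv

namespace OrthogonalIdempotents

variable {R : Type*} [CommRing R] {ι : Type*} {e : ι → R}

theorem isCoprime_one_sub (he : OrthogonalIdempotents e) {i j : ι} (hij : i ≠ j) :
    IsCoprime (1 - e i) (1 - e j) :=
  ⟨e j, 1, by rw [mul_sub, mul_one, he.ortho hij.symm]; ring⟩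

variable [Fintype ι]

theorem iInf_span_one_sub (he : OrthogonalIdempotents e) :
    ⨅ i, Ideal.span {1 - e i} = Ideal.span {1 - ∑ i, e i} := by
  rw [Ideal.iInf_span_singleton fun i j hij => he.isCoprime_one_sub hij, he.prod_one_sub]

noncomputable def quotientEquivPi (he : OrthogonalIdempotents e) :
    R ⧸ Ideal.span {1 - ∑ i, e i} ≃+* ∀ i, R ⧸ Ideal.span {1 - e i} :=
  (Ideal.quotEquivOfEq he.iInf_span_one_sub.symm).trans <|
    Ideal.quotientInfRingEquivPiQuotient _ fun _ _ hij =>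
      Ideal.isCoprime_span_singleton_iff _ _ |>.2 (he.isCoprime_one_sub hij)

theorem quotientEquivPi_mk (he : OrthogonalIdempotents e) (x : R) (i : ι) :
    he.quotientEquivPi (Ideal.Quotient.mk _ x) i = Ideal.Quotient.mk _ x :=
  rfl

theorem hasSRCFactorization_map_sum (he : OrthogonalIdempotents e) {g : R[X]} (hg : g.Monic)
    {d : ℕ} {f₀ f₁ : ∀ i, (R ⧸ Ideal.span {1 - e i})[X]}
    (hf : ∀ i, IsSRCFactorization (g.map (Ideal.Quotient.mk _)) (f₀ i) (f₁ i))
    (hd : ∀ i, (f₀ i).natDegree = d) :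
    HasSRCFactorization (g.map (Ideal.Quotient.mk (Ideal.span {1 - ∑ i, e i}))) := by
  let ρ := he.quotientEquivPi.toRingHom
  have hcomp : ∀ i, (Pi.evalRingHom _ i).comp (ρ.comp (Ideal.Quotient.mk _)) =
      Ideal.Quotient.mk (Ideal.span {1 - e i}) := fun i => RingHom.ext (he.quotientEquivPi_mk · i)
  have hglued := hasSRCFactorization_of_forall_map_evalRingHom
    ((hg.map (Ideal.Quotient.mk (Ideal.span {1 - ∑ i, e i}))).map ρ) (f₁ := f₁)
    (by simpa only [Polynomial.map_map, hcomp] using hf) hd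
  have hinv : he.quotientEquivPi.symm.toRingHom.comp ρ = RingHom.id _ :=
    RingHom.ext he.quotientEquivPi.symm_apply_apply
  simpa only [Polynomial.map_map, ← RingHom.comp_assoc, hinv, RingHom.id_comp] using
    hglued.map he.quotientEquivPi.symm.toRingHom

end OrthogonalIdempotents

theorem CompleteOrthogonalIdempotents.sum_fiberwise {R : Type*} [CommRing R] {ι κ : Type*}
    [Fintype ι] [Fintype κ] [DecidableEq κ] {e : ι → R} (he : CompleteOrthogonalIdempotents e)
    (c : ι → κ) : CompleteOrthogonalIdempotents fun j => ∑ i : {i // c i = j}, e i where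
  idem _ := (he.1.embedding (Function.Embedding.subtype _)).isIdempotentElem_sum
  ortho j j' hjj' := by
    simp only [Finset.sum_mul_sum]
    refine Finset.sum_eq_zero fun i _ => Finset.sum_eq_zero fun i' _ => he.ortho ?_
    rintro hii'
    exact hjj' (i.2.symm.trans ((congrArg c hii').trans i'.2))
  complete := (Fintype.sum_fiberwise c e).trans he.complete

theorem isCompleteOrthogonalIdempotents_iff {R : Type*} [CommRing R] {k : ℕ} {e : Fin k → R} :
    IsCompleteOrthogonalIdempotents e ↔ CompleteOrthogonalIdempotents e :=
  ⟨fun ⟨hidem, hortho, hsum⟩ => ⟨⟨hidem, fun i j => hortho i j⟩, hsum⟩,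
    fun he => ⟨he.idem, fun _ _ hij => he.ortho hij, he.complete⟩⟩

theorem gSRCFactorization_card_le_general {R : Type*} [CommRing R]
    {n : ℕ} (h : Polynomial R) (hmonic : h.Monic) (hdeg : h.natDegree = n)
    (hg : HasGSRCFactorization h) :
    ∃ m : ℕ, m ≤ n + 1 ∧ ∃ e : Fin m → R, IsCompleteOrthogonalIdempotents e ∧
      ∀ i, HasSRCFactorization (h.map (Ideal.Quotient.mk (Ideal.span {1 - e i}))) := by
  obtain ⟨k, e, he, hsrc⟩ := hg
  rw [isCompleteOrthogonalIdempotents_iff] at he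
  choose f₀ f₁ hf using fun i => hasSRCFactorization_iff.1 (hsrc i)
  have hdeg_le (i : Fin k) : (f₀ i).natDegree ≤ n :=
    hdeg ▸ (hf i).natDegree_left_le.trans natDegree_map_le
  let c (i : Fin k) : Fin (n + 1) := ⟨(f₀ i).natDegree, Nat.lt_succ_of_le (hdeg_le i)⟩
  refine ⟨n + 1, le_rfl, fun j => ∑ i : {i // c i = j}, e i,
    isCompleteOrthogonalIdempotents_iff.2 (he.sum_fiberwise c), fun j => ?_⟩
  exact (he.1.embedding (Function.Embedding.subtype _)).hasSRCFactorization_map_sum hmonic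
    (fun i => hf i) (fun i => congrArg Fin.val i.2)

/-- If a monic polynomial of degree `n` over a commutative clean ring has a
gSRC-factorization, then it has one whose complete orthogonal set of idempotents has at most
`n + 1` elements. -/
theorem gSRCFactorization_card_le {R : Type*} [CommRing R] (hR : IsCleanRing R)
    {n : ℕ} (hn : 2 ≤ n) (h : Polynomial R) (hmonic : h.Monic) (hdeg : h.natDegree = n)
    (hg : HasGSRCFactorization h) :
    ∃ m : ℕ, m ≤ n + 1 ∧ ∃ e : Fin m → R, IsCompleteOrthogonalIdempotents e ∧
      ∀ i, HasSRCFactorization (h.map (Ideal.Quotient.mk (Ideal.span {1 - e i}))) :=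
  gSRCFactorization_card_le_general h hmonic hdeg hg
end

section
/- Let R be a commutative ring, 𝔭 a prime ideal of R, I(𝔭) the ideal of R generated by the idempotents of R lying in 𝔭, and S = R/I(𝔭) the Pierce stalk of R at 𝔭. Then for every finitely generated projective S-module N there exists a finitely generated projective R-module V such that V/I(𝔭)V is isomorphic to N as an S-module. -/
/-- The ideal of `R` generated by the idempotents of `R` lying in `p`; the Pierce stalk of `R`
at the prime `p` is `R ⧸ pierceIdeal p`. -/
def pierceIdeal {R : Type*} [CommRing R] (p : Ideal R) : Ideal R :=
  Ideal.span {e : R | IsIdempotentElem e ∧ e ∈ p}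

universe u

set_option maxHeartbeats 1600000

section Aux
variable {R : Type u} [CommRing R]

lemma prod_one_sub_idem (T : Finset R) (hT : ∀ t ∈ T, IsIdempotentElem t) :
    IsIdempotentElem (∏ t ∈ T, (1 - t)) := by
  classical
  induction T using Finset.induction_on with
  | empty => simpa using IsIdempotentElem.one
  | @insert a s ha ih =>
    
    rw [Finset.prod_insert ha]
    exact IsIdempotentElem.mul ((hT a (Finset.mem_insert_self a s)).one_sub)
      (ih fun t ht => hT t (Finset.mem_insert_of_mem ht))

lemma join_idem (T : Finset R) (hT : ∀ t ∈ T, IsIdempotentElem t) :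
    IsIdempotentElem (1 - ∏ t ∈ T, (1 - t)) :=
  (prod_one_sub_idem T hT).one_sub

lemma join_mem_span (T : Finset R) (hT : ∀ t ∈ T, IsIdempotentElem t) :
    (1 - ∏ t ∈ T, (1 - t)) ∈ Ideal.span (T : Set R) := by
  classical
  induction T using Finset.induction_on with
  | empty => simp
  | @insert a s ha ih =>
    
    rw [Finset.prod_insert ha]
    have h1 : (1 : R) - (1 - a) * ∏ t ∈ s, (1 - t)
        = (1 - ∏ t ∈ s, (1 - t)) + a * ∏ t ∈ s, (1 - t) := by ring
    rw [h1]
    refine Ideal.add_mem _ ?_ ?_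
    · exact Ideal.span_mono (by simp [Finset.coe_insert, Set.subset_insert])
        (ih fun t ht => hT t (Finset.mem_insert_of_mem ht))
    · exact Ideal.mul_mem_right _ _ (Ideal.subset_span (by simp))

lemma join_dvd (T : Finset R) (hT : ∀ t ∈ T, IsIdempotentElem t)
    {t : R} (ht : t ∈ T) : (1 - ∏ s ∈ T, (1 - s)) ∣ t := by
  classical
  refine ⟨t, ?_⟩
  have h0 : t * ∏ s ∈ T, (1 - s) = 0 := by
    rw [← Finset.mul_prod_erase T _ ht, ← mul_assoc]
    have h1 : t * (1 - t) = 0 := by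
      have h2 := hT t ht
      unfold IsIdempotentElem at h2
      rw [mul_sub, mul_one, h2, sub_self]
    rw [h1, zero_mul]
  have : (1 - ∏ s ∈ T, (1 - s)) * t = t - t * ∏ s ∈ T, (1 - s) := by ring
  rw [this, h0, sub_zero]

theorem aux_pierce_lift {R : Type u} [CommRing R]
    (s : Set R) (hs : ∀ x ∈ s, IsIdempotentElem x) (I : Ideal R) (hIs : I = Ideal.span s)
    (N : Type u) [AddCommGroup N] [Module (R ⧸ I) N]
    (hfg : Module.Finite (R ⧸ I) N)
    (hproj : Module.Projective (R ⧸ I) N) :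
    ∃ (V : Type u) (_ : AddCommGroup V) (_ : Module R V),
      Module.Finite R V ∧ Module.Projective R V ∧
      Nonempty ((V ⧸ (I • ⊤ : Submodule R V)) ≃ₗ[R ⧸ I] N) := by
  classical

  classical
  haveI := hfg
  haveI := hproj
  -- Step 1: a split surjection from a finite free module
  obtain ⟨n, π, hπ⟩ := Module.Finite.exists_fin' (R ⧸ I) N
  obtain ⟨σ, hσ⟩ := Module.projective_lifting_property π LinearMap.id hπ
  have hπσ : ∀ x, π (σ x) = x := fun x => congrArg (fun g => g x) (congrArg DFunLike.coe hσ)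
  set f : (Fin n → R ⧸ I) →ₗ[R ⧸ I] (Fin n → R ⧸ I) := σ ∘ₗ π with hfdef
  have hff : ∀ x, f (f x) = f x := by
    intro x
    simp only [hfdef, LinearMap.comp_apply, hπσ]
  -- Step 2: lift the matrix of f
  set M : Matrix (Fin n) (Fin n) (R ⧸ I) := LinearMap.toMatrix' f with hMdef
  have hMM : M * M = M := by
    rw [hMdef, ← LinearMap.toMatrix'_comp]
    congr 1
    exact LinearMap.ext hff
  set A : Matrix (Fin n) (Fin n) R :=
    fun i j => (Ideal.Quotient.mk_surjective (I := I) (M i j)).choose with hAdef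
  have hA : ∀ i j, Ideal.Quotient.mk I (A i j) = M i j :=
    fun i j => (Ideal.Quotient.mk_surjective (I := I) (M i j)).choose_spec
  have hAmap : A.map (Ideal.Quotient.mk I) = M := by
    ext i j; exact hA i j
  have hAI : ∀ i j, (A * A - A) i j ∈ I := by
    intro i j
    rw [← Ideal.Quotient.eq_zero_iff_mem]
    have : ((A * A - A).map (Ideal.Quotient.mk I)) i j = 0 := by
      rw [Matrix.map_sub _ (by exact fun a b => map_sub _ a b), Matrix.map_mul, hAmap, hMM]
      simp
    simpa [Matrix.map_apply] using this
  -- Step 3: a single idempotent e ∈ p controlling all the entries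
  have hspan : ∀ i j, ∃ T : Finset R,
      ↑T ⊆ s ∧ (A * A - A) i j ∈ Ideal.span (T : Set R) := by
    intro i j
    have := hAI i j
    rw [hIs] at this
    exact Submodule.mem_span_finite_of_mem_span this
  choose T hTsub hTmem using hspan
  set Tall : Finset R := Finset.univ.biUnion (fun ij : Fin n × Fin n => T ij.1 ij.2) with hTall
  have hTall_sub : (Tall : Set R) ⊆ s := by
    intro t ht
    simp only [hTall, Finset.coe_biUnion, Set.mem_iUnion, Finset.mem_coe] at ht
    obtain ⟨ij, _, hij⟩ := ht
    exact hTsub ij.1 ij.2 hij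
  have hTall_idem : ∀ t ∈ Tall, IsIdempotentElem t := fun t ht => hs t (hTall_sub ht)
  have hAT : ∀ i j, (A * A - A) i j ∈ Ideal.span (Tall : Set R) := by
    intro i j
    refine Ideal.span_mono ?_ (hTmem i j)
    intro t ht
    simp only [hTall, Finset.coe_biUnion, Set.mem_iUnion, Finset.mem_coe]
    exact ⟨(i, j), Finset.mem_univ _, ht⟩
  set e : R := 1 - ∏ t ∈ Tall, (1 - t) with hedef
  have he_idem : IsIdempotentElem e := join_idem Tall hTall_idem
  have he_I : e ∈ I := by
    rw [hIs]
    exact Ideal.span_mono hTall_sub (join_mem_span Tall hTall_idem)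
  set J : Ideal R := Ideal.span {e} with hJdef
  have hJI : J ≤ I := (Ideal.span_singleton_le_iff_mem _).2 he_I
  have hTallJ : Ideal.span (Tall : Set R) ≤ J := by
    refine Ideal.span_le.2 fun t ht => ?_
    exact Ideal.mem_span_singleton.2 (join_dvd Tall hTall_idem ht)
  have hAJ : ∀ i j, (A * A - A) i j ∈ J := fun i j => hTallJ (hAT i j)
  -- Step 4: the idempotent matrix over R' = R ⧸ J
  set B : Matrix (Fin n) (Fin n) (R ⧸ J) := A.map (Ideal.Quotient.mk J) with hBdef
  have hBB : B * B = B := by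
    have : (A * A - A).map (Ideal.Quotient.mk J) = 0 := by
      ext i j
      simpa [Matrix.map_apply] using (Ideal.Quotient.eq_zero_iff_mem).2 (hAJ i j)
    rw [Matrix.map_sub _ (by exact fun a b => map_sub _ a b), Matrix.map_mul] at this
    rw [hBdef, ← sub_eq_zero]
    exact this
  set h : (Fin n → R ⧸ J) →ₗ[R ⧸ J] (Fin n → R ⧸ J) := Matrix.toLin' B with hhdef
  have hhh : ∀ x, h (h x) = h x := by
    intro x
    rw [hhdef, ← LinearMap.comp_apply, ← Matrix.toLin'_mul, hBB]
  set Vsub : Submodule (R ⧸ J) (Fin n → R ⧸ J) := LinearMap.range h with hVdef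
  refine ⟨↥Vsub, inferInstance, inferInstance, ?_, ?_, ?_⟩
  · exact Module.Finite.trans (R ⧸ J) ↥Vsub
  · -- projectivity over R
    have hker : J ≤ LinearMap.ker (LinearMap.lsmul R R (1 - e)) := by
      intro x hx
      rw [hJdef, Ideal.mem_span_singleton'] at hx
      obtain ⟨c, rfl⟩ := hx
      have hee : e - e * e = 0 := by rw [he_idem]; ring
      rw [LinearMap.mem_ker, LinearMap.lsmul_apply]
      have hcalc : (1 - e) • (c * e) = c * (e - e * e) := by
        simp only [smul_eq_mul]; ring
      rw [hcalc, hee, mul_zero]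
    set sec : (R ⧸ J) →ₗ[R] R := Submodule.liftQ J (LinearMap.lsmul R R (1 - e)) hker
      with hsecdef
    have hsec : ∀ y : R ⧸ J, J.mkQ (sec y) = y := by
      intro y
      obtain ⟨r, rfl⟩ := Submodule.Quotient.mk_surjective J y
      rw [hsecdef, Submodule.liftQ_apply, Submodule.mkQ_apply, Submodule.Quotient.eq]
      simp only [LinearMap.lsmul_apply, smul_eq_mul]
      have : (1 - e) * r - r = -r * e := by ring
      rw [this]
      exact Ideal.mul_mem_left _ _ (Ideal.subset_span (Set.mem_singleton _))
    set i2 : (Fin n → R ⧸ J) →ₗ[R] (Fin n → R) :=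
      LinearMap.pi (fun i => sec ∘ₗ LinearMap.proj i) with hi2
    set s2 : (Fin n → R) →ₗ[R] (Fin n → R ⧸ J) :=
      LinearMap.pi (fun i => J.mkQ ∘ₗ LinearMap.proj i) with hs2
    have hmem : ∀ x, h x ∈ Vsub := fun x => LinearMap.mem_range_self h x
    set iV : ↥Vsub →ₗ[R] (Fin n → R ⧸ J) := (Vsub.subtype).restrictScalars R with hiV
    set sV : (Fin n → R ⧸ J) →ₗ[R] ↥Vsub :=
      (LinearMap.codRestrict Vsub h hmem).restrictScalars R with hsV
    have hfix : ∀ x : ↥Vsub, h ↑x = ↑x := by rintro ⟨x, y, rfl⟩; exact hhh y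
    refine Module.Projective.of_split (M := Fin n → R) (i2 ∘ₗ iV) ((sV ∘ₗ s2)) ?_
    apply LinearMap.ext
    intro x
    apply Subtype.ext
    show h (fun i => J.mkQ (sec ((x : Fin n → R ⧸ J) i))) = (x : Fin n → R ⧸ J)
    have hxx : (fun i => J.mkQ (sec ((x : Fin n → R ⧸ J) i))) = (x : Fin n → R ⧸ J) := by
      funext i; exact hsec _
    rw [hxx]
    exact hfix x
  · -- the equivalence
    have hq0ker : J ≤ LinearMap.ker I.mkQ := by
      intro x hx
      rw [LinearMap.mem_ker, Submodule.mkQ_apply, Submodule.Quotient.mk_eq_zero]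
      exact hJI hx
    set q0 : (R ⧸ J) →ₗ[R] (R ⧸ I) := Submodule.liftQ J I.mkQ hq0ker with hq0def
    have hq0 : ∀ r : R, q0 (Ideal.Quotient.mk J r) = Ideal.Quotient.mk I r := by
      intro r
      rw [hq0def]
      exact Submodule.liftQ_apply _ _ _
    set q : (Fin n → R ⧸ J) →ₗ[R] (Fin n → R ⧸ I) :=
      LinearMap.pi (fun i => q0 ∘ₗ LinearMap.proj i) with hqdef
    have hqapp : ∀ (x : Fin n → R ⧸ J) (i : Fin n), q x i = q0 (x i) := fun x i => rfl
    have hfM : ∀ v, f v = M.mulVec v := by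
      intro v
      conv_lhs => rw [← Matrix.toLin'_toMatrix' f]
      rw [← hMdef, Matrix.toLin'_apply]
    have hqh : ∀ x, q (h x) = f (q x) := by
      intro x
      choose xr hxr using fun i => Ideal.Quotient.mk_surjective (I := J) (x i)
      have hx_eq : x = fun j => Ideal.Quotient.mk J (xr j) := by
        funext j; exact (hxr j).symm
      funext i
      have e1 : (h x) i = Ideal.Quotient.mk J ((A.mulVec xr) i) := by
        rw [hhdef, Matrix.toLin'_apply, hBdef, hx_eq]
        exact (RingHom.map_mulVec (Ideal.Quotient.mk J) A xr i).symm
      have e2 : q x = fun j => Ideal.Quotient.mk I (xr j) := by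
        funext j
        rw [hqapp, hx_eq]
        exact hq0 (xr j)
      rw [hqapp, e1, hq0, hfM, e2, ← hAmap]
      exact RingHom.map_mulVec (Ideal.Quotient.mk I) A xr i
    set Wsub : Submodule (R ⧸ I) (Fin n → R ⧸ I) := LinearMap.range f with hWdef
    have hfix : ∀ x : ↥Vsub, h ↑x = ↑x := by rintro ⟨x, y, rfl⟩; exact hhh y
    have hmemW : ∀ x : ↥Vsub, q ↑x ∈ Wsub := by
      intro x
      refine LinearMap.mem_range.2 ⟨q ↑x, ?_⟩
      rw [← hqh, hfix x]
    set φ : ↥Vsub →ₗ[R] ↥Wsub :=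
      { toFun := fun x => ⟨q ↑x, hmemW x⟩
        map_add' := by
          intro a b
          apply Subtype.ext
          simp
        map_smul' := by
          intro r a
          apply Subtype.ext
          simp [SetLike.val_smul_of_tower] } with hφdef
    have hφapply : ∀ x, (φ x : Fin n → R ⧸ I) = q ↑x := fun _ => rfl
    have hsmul_q : ∀ (c : R) (y : Fin n → R ⧸ I), c ∈ I → c • y = 0 := by
      intro c y hc
      have h1 : c • y = (algebraMap R (R ⧸ I) c) • y := (algebraMap_smul (R ⧸ I) c y).symm
      rw [h1, Ideal.Quotient.algebraMap_eq, Ideal.Quotient.eq_zero_iff_mem.2 hc, zero_smul]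
    have hφker : (I • (⊤ : Submodule R ↥Vsub)) ≤ LinearMap.ker φ := by
      refine Submodule.smul_le.2 fun c hc x _ => ?_
      rw [LinearMap.mem_ker]
      apply Subtype.ext
      rw [hφapply]
      have h1 : ((c • x : ↥Vsub) : Fin n → R ⧸ J) = c • (x : Fin n → R ⧸ J) := rfl
      rw [h1, map_smul]
      exact hsmul_q c _ hc
    set φbar : (↥Vsub ⧸ (I • (⊤ : Submodule R ↥Vsub))) →ₗ[R] ↥Wsub :=
      Submodule.liftQ _ φ hφker with hφbardef
    have hφbar_mk : ∀ x, φbar (Submodule.Quotient.mk x) = φ x := fun x => rfl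
    -- surjectivity
    have hφbar_surj : Function.Surjective φbar := by
      intro y
      obtain ⟨z, hz⟩ := LinearMap.mem_range.1 y.2
      choose zr hzr using fun i => Ideal.Quotient.mk_surjective (I := I) (z i)
      set w : Fin n → R ⧸ J := fun i => Ideal.Quotient.mk J (zr i) with hwdef
      have hqw : q w = z := by
        funext i
        rw [hqapp, hwdef, hq0, hzr]
      refine ⟨Submodule.Quotient.mk ⟨h w, LinearMap.mem_range_self h w⟩, ?_⟩
      rw [hφbar_mk]
      apply Subtype.ext
      rw [hφapply]
      show q (h w) = ↑y
      rw [hqh, hqw, hz]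
    -- injectivity
    have hker_le : LinearMap.ker φ ≤ I • (⊤ : Submodule R ↥Vsub) := by
      intro x hx
      have hx0 : q ↑x = 0 := by
        have := congrArg (Subtype.val) (LinearMap.mem_ker.1 hx)
        simpa [hφapply] using this
      choose xr hxr using fun i => Ideal.Quotient.mk_surjective (I := J) ((x : Fin n → R ⧸ J) i)
      have hxrI : ∀ i, xr i ∈ I := by
        intro i
        have h1 : q0 ((x : Fin n → R ⧸ J) i) = 0 := by
          have := congrFun hx0 i
          rwa [hqapp] at this
        rw [← hxr i, hq0] at h1
        exact Ideal.Quotient.eq_zero_iff_mem.1 h1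
      set v : Fin n → ↥Vsub := fun i => ⟨h (Pi.single i 1), LinearMap.mem_range_self h _⟩
        with hvdef
      have hxsum : x = ∑ i, xr i • v i := by
        apply Subtype.ext
        have h1 : ((∑ i, xr i • v i : ↥Vsub) : Fin n → R ⧸ J)
            = ∑ i, xr i • h (Pi.single i 1) := by
          push_cast
          rfl
        rw [h1]
        have h2 : ∀ i : Fin n, xr i • h (Pi.single i 1)
            = h ((x : Fin n → R ⧸ J) i • (Pi.single i (1 : R ⧸ J) : Fin n → R ⧸ J)) := by
          intro i
          rw [← hxr i, ← Ideal.Quotient.algebraMap_eq, algebraMap_smul,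
            LinearMap.map_smul_of_tower]
        simp only [h2]
        rw [← map_sum]
        have h3 : (∑ i, (x : Fin n → R ⧸ J) i • (Pi.single i (1 : R ⧸ J) : Fin n → R ⧸ J))
            = (x : Fin n → R ⧸ J) := by
          funext j
          simp [Pi.single_apply, Finset.sum_apply]
        rw [h3, hfix x]
      rw [hxsum]
      exact Submodule.sum_mem _ fun i _ =>
        Submodule.smul_mem_smul (hxrI i) Submodule.mem_top
    have hφbar_inj : Function.Injective φbar := by
      rw [← LinearMap.ker_eq_bot, hφbardef]
      exact Submodule.ker_liftQ_eq_bot _ _ _ hker_le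
    -- upgrade to (R ⧸ I)-linearity
    set ψ : (↥Vsub ⧸ (I • (⊤ : Submodule R ↥Vsub))) →ₗ[R ⧸ I] ↥Wsub :=
      { toFun := φbar
        map_add' := fun a b => map_add φbar a b
        map_smul' := by
          intro c z
          obtain ⟨r, rfl⟩ := Ideal.Quotient.mk_surjective c
          obtain ⟨x, rfl⟩ := Submodule.Quotient.mk_surjective _ z
          show φbar (Ideal.Quotient.mk I r • Submodule.Quotient.mk x)
            = Ideal.Quotient.mk I r • φbar (Submodule.Quotient.mk x)
          have lhs : φbar (Ideal.Quotient.mk I r • Submodule.Quotient.mk x) = φ (r • x) := rfl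
          rw [lhs, map_smul, hφbar_mk]
          apply Subtype.ext
          rw [SetLike.val_smul_of_tower, SetLike.val_smul,
            ← algebraMap_smul (R ⧸ I) r ((φ x : Fin n → R ⧸ I)), Ideal.Quotient.algebraMap_eq]
      } with hψdef
    have hψ_bij : Function.Bijective ψ := ⟨hφbar_inj, hφbar_surj⟩
    set eq1 := LinearEquiv.ofBijective ψ hψ_bij with heq1
    -- identify ↥Wsub with N
    have hmemσ : ∀ x : N, σ x ∈ Wsub := by
      intro x
      refine LinearMap.mem_range.2 ⟨σ x, ?_⟩
      rw [hfdef]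
      show σ (π (σ x)) = σ x
      rw [hπσ]
    set ρ : N →ₗ[R ⧸ I] ↥Wsub := LinearMap.codRestrict Wsub σ hmemσ with hρdef
    set τ : ↥Wsub →ₗ[R ⧸ I] N := π ∘ₗ Wsub.subtype with hτdef
    have h₁ : τ ∘ₗ ρ = LinearMap.id := by
      apply LinearMap.ext
      intro x
      show π (σ x) = x
      exact hπσ x
    have h₂ : ρ ∘ₗ τ = LinearMap.id := by
      apply LinearMap.ext
      intro y
      apply Subtype.ext
      show σ (π ↑y) = ↑y
      obtain ⟨z, hz⟩ := LinearMap.mem_range.1 y.2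
      rw [← hz, hfdef]
      show σ (π (σ (π z))) = σ (π z)
      rw [hπσ]
    set eq2 : ↥Wsub ≃ₗ[R ⧸ I] N := LinearEquiv.ofLinear τ ρ h₁ h₂ with heq2
    exact ⟨eq1.trans eq2⟩

end Aux


/-- Finitely generated projective modules over a Pierce stalk `R ⧸ I(p)` lift: for every
finitely generated projective `R ⧸ I(p)`-module `N` there is a finitely generated projective
`R`-module `V` with `V ⧸ I(p)V ≅ N`. -/
theorem exists_projective_lift_of_pierceStalk {R : Type u} [CommRing R]
    (p : Ideal R) (hp : p.IsPrime)
    (N : Type u) [AddCommGroup N] [Module (R ⧸ pierceIdeal p) N]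
    (hfg : Module.Finite (R ⧸ pierceIdeal p) N)
    (hproj : Module.Projective (R ⧸ pierceIdeal p) N) :
    ∃ (V : Type u) (_ : AddCommGroup V) (_ : Module R V),
      Module.Finite R V ∧ Module.Projective R V ∧
      Nonempty ((V ⧸ (pierceIdeal p • ⊤ : Submodule R V)) ≃ₗ[R ⧸ pierceIdeal p] N) :=
  aux_pierce_lift {e : R | IsIdempotentElem e ∧ e ∈ p} (fun _ hx => hx.1)
    (pierceIdeal p) rfl N hfg hproj
end

section
/- Let R be a commutative clean ring and n ≥ 2. Then the ring of upper triangular n × n matrices over R is strongly clean: for every A ∈ Mₙ(R) with A i j = 0 whenever j < i, there exist matrices E, U, V ∈ Mₙ(R), all with zero entries below the diagonal, such that E² = E, UV = VU = 1, A = E + U, and EU = UE. -/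
section Aux

variable {R : Type*} [CommRing R]

private lemma unit_of_primes {d : R} (h : ∀ p : Ideal R, p.IsPrime → d ∉ p) : IsUnit d := by
  by_contra hd
  obtain ⟨m, hm, hdm⟩ := exists_max_ideal_of_mem_nonunits hd
  exact h m hm.isPrime hdm

private lemma unit_not_mem {p : Ideal R} (hp : p.IsPrime) {x : R} (hx : IsUnit x) : x ∉ p :=
  fun h => hp.ne_top (Ideal.eq_top_of_isUnit_mem p h hx)

private lemma one_not_mem {p : Ideal R} (hp : p.IsPrime) : (1 : R) ∉ p :=
  unit_not_mem hp isUnit_one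

private lemma idem_cases {p : Ideal R} (hp : p.IsPrime) {e : R} (he : IsIdempotentElem e) :
    e ∈ p ∨ 1 - e ∈ p := by
  have h0 : e * (1 - e) = 0 := by rw [mul_sub, mul_one, he.eq, sub_self]
  exact hp.mem_or_mem (h0 ▸ p.zero_mem)

private lemma extend_clean (hR : IsCleanRing R) {n : ℕ} (a : Fin n → R) (b : R)
    (e : Fin n → R) (he : ∀ i, IsIdempotentElem (e i)) (hu : ∀ i, IsUnit (a i - e i))
    (hP : ∀ i j, ∀ p : Ideal R, p.IsPrime → e i ∉ p → e j ∈ p → a i - a j ∉ p) :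
    ∃ f : R, IsIdempotentElem f ∧ IsUnit (b - f) ∧
      (∀ i, ∀ p : Ideal R, p.IsPrime → f ∉ p → e i ∈ p → b - a i ∉ p) ∧
      (∀ i, ∀ p : Ideal R, p.IsPrime → e i ∉ p → f ∈ p → a i - b ∉ p) := by
  classical
  set b₁ : R := (b - 1) * ∏ i, (e i + (1 - e i) * (b - a i)) with hb₁
  set b₀ : R := b * ∏ i, ((1 - e i) + e i * (b - a i)) with hb₀
  have fact1 : ∀ (i : Fin n) (p : Ideal R), p.IsPrime →
      e i + (1 - e i) * (b - a i) ∈ p → e i ∈ p ∧ b - a i ∈ p := by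
    intro i p hp hf
    rcases idem_cases hp (he i) with hei | hei
    · refine ⟨hei, ?_⟩
      have h2 : (1 - e i) * (b - a i) ∈ p := by
        have := p.sub_mem hf hei; simpa using this
      rcases hp.mem_or_mem h2 with h | h
      · exact absurd (by simpa using p.add_mem hei h) (one_not_mem hp)
      · exact h
    · have h2 : e i ∈ p := by
        have h3 : (1 - e i) * (b - a i) ∈ p := Ideal.mul_mem_right _ _ hei
        have := p.sub_mem hf h3; simpa using this
      exact absurd (by simpa using p.add_mem h2 hei) (one_not_mem hp)
  have fact0 : ∀ (i : Fin n) (p : Ideal R), p.IsPrime →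
      (1 - e i) + e i * (b - a i) ∈ p → (1 - e i) ∈ p ∧ b - a i ∈ p := by
    intro i p hp hf
    rcases idem_cases hp (he i) with hei | hei
    · have h3 : e i * (b - a i) ∈ p := Ideal.mul_mem_right _ _ hei
      have h2 : (1 - e i) ∈ p := by
        have := p.sub_mem hf h3; simpa using this
      exact absurd (by simpa using p.add_mem hei h2) (one_not_mem hp)
    · refine ⟨hei, ?_⟩
      have h2 : e i * (b - a i) ∈ p := by
        have := p.sub_mem hf hei; simpa using this
      rcases hp.mem_or_mem h2 with h | h
      · exact absurd (by simpa using p.add_mem h hei) (one_not_mem hp)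
      · exact h
  have cover : ∀ p : Ideal R, p.IsPrime → b₀ ∈ p → b₁ ∉ p := by
    intro p hp h0 h1
    have h0' : b ∈ p ∨ ∃ i : Fin n, (1 - e i) + e i * (b - a i) ∈ p := by
      rcases hp.mem_or_mem h0 with h | h
      · exact Or.inl h
      · exact Or.inr (by simpa using (Ideal.IsPrime.prod_mem_iff).mp h)
    have h1' : b - 1 ∈ p ∨ ∃ j : Fin n, e j + (1 - e j) * (b - a j) ∈ p := by
      rcases hp.mem_or_mem h1 with h | h
      · exact Or.inl h
      · exact Or.inr (by simpa using (Ideal.IsPrime.prod_mem_iff).mp h)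
    rcases h0' with hb | ⟨i, hi⟩
    · rcases h1' with hb1 | ⟨j, hj⟩
      · exact one_not_mem hp (by simpa using p.sub_mem hb hb1)
      · obtain ⟨hej, hbaj⟩ := fact1 j p hp hj
        have h4 : a j - e j ∈ p := by
          have : a j ∈ p := by have := p.sub_mem hb hbaj; simpa using this
          exact p.sub_mem this hej
        exact unit_not_mem hp (hu j) h4
    · obtain ⟨hei, hbai⟩ := fact0 i p hp hi
      have heinot : e i ∉ p := fun h => one_not_mem hp (by simpa using p.add_mem h hei)
      rcases h1' with hb1 | ⟨j, hj⟩
      · have h4 : a i - e i ∈ p := by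
          have h5 : a i - 1 ∈ p := by
            have := p.add_mem (p.neg_mem hbai) hb1  -- (a i - b) + (b - 1)
            simpa using this
          have := p.add_mem h5 hei
          simpa using this
        exact unit_not_mem hp (hu i) h4
      · obtain ⟨hej, hbaj⟩ := fact1 j p hp hj
        have h4 : a i - a j ∈ p := by
          have := p.add_mem (p.neg_mem hbai) hbaj
          simpa using this
        exact hP i j p hp heinot hej h4
  have hspan : Ideal.span ({b₀, b₁} : Set R) = ⊤ := by
    by_contra hne
    obtain ⟨m, hm, hle⟩ := Ideal.exists_le_maximal _ hne
    have h0 : b₀ ∈ m := hle (Ideal.subset_span (by simp))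
    have h1 : b₁ ∈ m := hle (Ideal.subset_span (by simp))
    exact cover m hm.isPrime h0 h1
  obtain ⟨r, s, hrs⟩ := Ideal.mem_span_pair.mp
    (by rw [hspan]; exact Submodule.mem_top : (1 : R) ∈ Ideal.span ({b₀, b₁} : Set R))
  obtain ⟨f, v, hf, hv, hfv⟩ := hR (r * b₀)
  obtain ⟨v', hvv'⟩ := IsUnit.exists_right_inv hv
  have hfvmul : f * v + f * (s * b₁) = 0 := by
    have hf' : f * f = f := hf.eq
    linear_combination f * hrs - f * hfv - hf'
  have hfb1 : f = (-(f * s * v')) * b₁ := by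
    linear_combination v' * hfvmul - f * hvv'
  have hfb0 : 1 - f = ((1 - f) * r * v') * b₀ := by
    have ha : (1 - f) * v = (1 - f) * (r * b₀) := by
      have hf' : f * f = f := hf.eq
      linear_combination -(1 - f) * hfv + hf'
    linear_combination v' * ha - (1 - f) * hvv'
  have hf1 : ∀ p : Ideal R, p.IsPrime → f ∉ p → b₁ ∉ p := by
    intro p hp hfp hb1p
    exact hfp (hfb1 ▸ Ideal.mul_mem_left _ _ hb1p)
  have hf0 : ∀ p : Ideal R, p.IsPrime → f ∈ p → b₀ ∉ p := by
    intro p hp hfp hb0p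
    have h1f : 1 - f ∈ p := hfb0 ▸ Ideal.mul_mem_left _ _ hb0p
    exact one_not_mem hp (by simpa using p.add_mem hfp h1f)
  refine ⟨f, hf, ?_, ?_, ?_⟩
  · apply unit_of_primes
    intro p hp hbf
    rcases idem_cases hp hf with hfp | hfp
    · -- f ∈ p : b₀ ∉ p hence b ∉ p, but b - f ∈ p gives b ∈ p
      have hb : b ∈ p := by have := p.add_mem hbf hfp; simpa using this
      exact hf0 p hp hfp (hb₀ ▸ Ideal.mul_mem_right _ _ hb)
    · -- 1 - f ∈ p : f ∉ p, so b₁ ∉ p, but b - 1 ∈ p gives b₁ ∈ p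
      have hfnp : f ∉ p := fun h => one_not_mem hp (by simpa using p.add_mem h hfp)
      have hb1 : b - 1 ∈ p := by
        have := p.sub_mem hbf hfp  -- (b - f) - (1 - f) = b - 1
        simpa using this
      exact hf1 p hp hfnp (hb₁ ▸ Ideal.mul_mem_right _ _ hb1)
  · intro i p hp hfp heip hbai
    have hfac : e i + (1 - e i) * (b - a i) ∈ p :=
      p.add_mem heip (Ideal.mul_mem_left _ _ hbai)
    have : b₁ ∈ p := by
      rw [hb₁]
      exact Ideal.mul_mem_left _ _ ((Ideal.IsPrime.prod_mem_iff).mpr ⟨i, Finset.mem_univ i, hfac⟩)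
    exact hf1 p hp hfp this
  · intro i p hp heip hfp haib
    have h1e : 1 - e i ∈ p := by
      rcases idem_cases hp (he i) with h | h
      · exact absurd h heip
      · exact h
    have hbai : b - a i ∈ p := by have := p.neg_mem haib; simpa using this
    have hfac : (1 - e i) + e i * (b - a i) ∈ p :=
      p.add_mem h1e (Ideal.mul_mem_left _ _ hbai)
    have : b₀ ∈ p := by
      rw [hb₀]
      exact Ideal.mul_mem_left _ _ ((Ideal.IsPrime.prod_mem_iff).mpr ⟨i, Finset.mem_univ i, hfac⟩)
    exact hf0 p hp hfp this

private lemma coherent_family (hR : IsCleanRing R) :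
    ∀ (n : ℕ) (a : Fin n → R), ∃ e : Fin n → R,
      (∀ i, IsIdempotentElem (e i)) ∧ (∀ i, IsUnit (a i - e i)) ∧
      (∀ i j, ∀ p : Ideal R, p.IsPrime → e i ∉ p → e j ∈ p → a i - a j ∉ p) := by
  intro n
  induction n with
  | zero => exact fun a => ⟨fun i => i.elim0, fun i => i.elim0, fun i => i.elim0, fun i => i.elim0⟩
  | succ m ih =>
    intro a
    obtain ⟨e', he', hu', hP'⟩ := ih (fun i => a i.castSucc)
    obtain ⟨f, hf, hbf, h3, h4⟩ := extend_clean hR (fun i => a i.castSucc) (a (Fin.last m)) e' he' hu' hP'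
    refine ⟨Fin.snoc e' f, ?_, ?_, ?_⟩
    · intro i
      refine Fin.lastCases ?_ (fun i => ?_) i
      · simpa using hf
      · simpa using he' i
    · intro i
      refine Fin.lastCases ?_ (fun i => ?_) i
      · simpa using hbf
      · simpa using hu' i
    · intro i j p hp
      refine Fin.lastCases ?_ (fun i' => ?_) i
      all_goals refine Fin.lastCases ?_ (fun j' => ?_) j
      · intro h1 h2
        simp only [Fin.snoc_last] at h1 h2
        exact absurd h2 h1
      · intro h1 h2
        simp only [Fin.snoc_last, Fin.snoc_castSucc] at h1 h2 ⊢
        exact h3 j' p hp h1 h2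
      · intro h1 h2
        simp only [Fin.snoc_last, Fin.snoc_castSucc] at h1 h2 ⊢
        exact h4 i' p hp h1 h2
      · intro h1 h2
        simp only [Fin.snoc_castSucc] at h1 h2 ⊢
        exact hP' i' j' p hp h1 h2

end Aux

section MatrixPart

open Matrix

variable {R : Type*} [CommRing R]

private lemma mem_congr {p : Ideal R} {x y : R} (h : x ∈ p) (hxy : x = y) : y ∈ p := hxy ▸ h

private lemma tri_smul {k : ℕ} (r : R) {M : Matrix (Fin k) (Fin k) R}
    (h : M.BlockTriangular id) : (r • M).BlockTriangular id := by
  intro i j hij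
  simp [Matrix.smul_apply, h hij]

private lemma vecMul_smul_mat {k l : ℕ} (r : R) (x : Fin k → R) (M : Matrix (Fin k) (Fin l) R) :
    x ᵥ* (r • M) = r • (x ᵥ* M) := by
  ext j
  simp [Matrix.vecMul, dotProduct, Finset.mul_sum, Matrix.smul_apply, smul_eq_mul,
    mul_left_comm]

private lemma diag_mul {k : ℕ} {M N : Matrix (Fin k) (Fin k) R}
    (hM : M.BlockTriangular id) (hN : N.BlockTriangular id) (i : Fin k) :
    (M * N) i i = M i i * N i i := by
  rw [Matrix.mul_apply, Finset.sum_eq_single i]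
  · intro j _ hji
    rcases lt_or_gt_of_ne hji with h | h
    · rw [hM (show (id j : Fin k) < id i from h), zero_mul]
    · rw [hN (show (id i : Fin k) < id j from h), mul_zero]
  · intro h
    exact absurd (Finset.mem_univ i) h

private lemma unit_aux {e f c : R} (he : IsIdempotentElem e) (hf : IsIdempotentElem f)
    (hc : ∀ p : Ideal R, p.IsPrime → e ∉ p → f ∈ p → c ∉ p) :
    IsUnit (e * ((1 - f) * c) + e * f + (1 - e)) := by
  apply unit_of_primes
  intro p hp hmem
  rcases idem_cases hp he with hep | hep
  · have h1 : e * ((1 - f) * c) ∈ p := Ideal.mul_mem_right _ _ hep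
    have h2 : e * f ∈ p := Ideal.mul_mem_right _ _ hep
    have h3 : (1 : R) - e ∈ p := by
      have h := p.sub_mem (p.sub_mem hmem h1) h2
      exact mem_congr h (by ring)
    exact one_not_mem hp (mem_congr (p.add_mem hep h3) (by ring))
  · have henp : e ∉ p := fun h => one_not_mem hp (mem_congr (p.add_mem h hep) (by ring))
    rcases idem_cases hp hf with hfp | hfp
    · have h2 : e * f ∈ p := Ideal.mul_mem_left _ _ hfp
      have h1 : e * ((1 - f) * c) ∈ p := by
        have h := p.sub_mem (p.sub_mem hmem h2) hep
        exact mem_congr h (by ring)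
      have h1f : (1 : R) - f ∉ p := fun h => one_not_mem hp (mem_congr (p.add_mem hfp h) (by ring))
      have hcp : c ∈ p := by
        rcases hp.mem_or_mem h1 with h | h
        · exact absurd h henp
        · rcases hp.mem_or_mem h with h' | h'
          · exact absurd h' h1f
          · exact h'
      exact hc p hp henp hfp hcp
    · have h1 : e * ((1 - f) * c) ∈ p := Ideal.mul_mem_left _ _ (Ideal.mul_mem_right _ _ hfp)
      have h2 : e * f ∈ p := by
        have h := p.sub_mem (p.sub_mem hmem h1) hep
        exact mem_congr h (by ring)
      have hfp' : f ∈ p := by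
        rcases hp.mem_or_mem h2 with h | h
        · exact absurd h henp
        · exact h
      exact one_not_mem hp (mem_congr (p.add_mem hfp' hfp) (by ring))

end MatrixPart

section Main

open Matrix

variable {R : Type*} [CommRing R]

private lemma tri_ind : ∀ (k : ℕ) (a e : Fin k → R),
    (∀ i, IsIdempotentElem (e i)) → (∀ i, IsUnit (a i - e i)) →
    (∀ i j, ∀ p : Ideal R, p.IsPrime → e i ∉ p → e j ∈ p → a i - a j ∉ p) →
    ∀ A : Matrix (Fin k) (Fin k) R, A.BlockTriangular id → (∀ i, A i i = a i) →
    ∃ E U V : Matrix (Fin k) (Fin k) R,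
      E.BlockTriangular id ∧ U.BlockTriangular id ∧ V.BlockTriangular id ∧
      E * E = E ∧ U * V = 1 ∧ V * U = 1 ∧ A = E + U ∧ E * U = U * E ∧ (∀ i, E i i = e i) := by
  intro k
  induction k with
  | zero =>
    intro a e _ _ _ A _ _
    have hall : ∀ X Y : Matrix (Fin 0) (Fin 0) R, X = Y := fun X Y => by
      ext i j; exact i.elim0
    exact ⟨0, A, 1, fun i j _ => i.elim0, fun i j _ => i.elim0, fun i j _ => i.elim0,
      hall _ _, hall _ _, hall _ _, hall _ _, hall _ _, fun i => i.elim0⟩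
  | succ k ih =>
    intro a e he hu hP A hA hdiag
    -- the submatrix
    set D : Matrix (Fin k) (Fin k) R := Matrix.of (fun i j : Fin k => A i.succ j.succ) with hDdef
    have hDtri : D.BlockTriangular id := by
      intro i j hij
      exact hA (show (id (j.succ) : Fin (k+1)) < id (i.succ) from Fin.succ_lt_succ_iff.mpr hij)
    obtain ⟨F, W, V', hFtri, hWtri, hV'tri, hFF, hWV, hVW, hDFW, hFWc, hFdiag⟩ :=
      ih (fun i => a i.succ) (fun i => e i.succ) (fun i => he i.succ) (fun i => hu i.succ)
        (fun i j p hp => hP i.succ j.succ p hp) D hDtri (fun i => hdiag i.succ)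
    have hFW : F * W = W * F := hFWc
    have hWdiag : ∀ i, W i i = a i.succ - e i.succ := by
      intro i
      have h1 : D i i = F i i + W i i := by rw [hDFW]; simp [Matrix.add_apply]
      have h2 : D i i = a i.succ := hdiag i.succ
      rw [hFdiag i] at h1
      rw [h2] at h1
      linear_combination -h1
    -- scalar data
    set e0 : R := e 0 with he0def
    set u0 : R := a 0 - e 0 with hu0def
    have he0 : IsIdempotentElem e0 := he 0
    have hu0 : IsUnit u0 := hu 0
    -- auxiliary matrices
    set M₁ : Matrix (Fin k) (Fin k) R := (1 + u0) • 1 - W with hM₁def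
    set M₂ : Matrix (Fin k) (Fin k) R := (1 - u0) • 1 + W with hM₂def
    set M₁' : Matrix (Fin k) (Fin k) R := e0 • ((1 - F) * M₁) + e0 • F + (1 - e0) • 1 with hM₁'def
    set M₂' : Matrix (Fin k) (Fin k) R := (1 - e0) • (F * M₂) + (1 - e0) • (1 - F) + e0 • 1
      with hM₂'def
    have hF1F : F * (1 - F) = 0 := by rw [Matrix.mul_sub, Matrix.mul_one, hFF, sub_self]
    have h1FF : (1 - F) * F = 0 := by rw [Matrix.sub_mul, Matrix.one_mul, hFF, sub_self]
    have hFM₁ : F * M₁ = M₁ * F := by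
      rw [hM₁def, Matrix.mul_sub, Matrix.sub_mul, Matrix.mul_smul, Matrix.smul_mul,
        Matrix.mul_one, Matrix.one_mul, hFW]
    have hFM₂ : F * M₂ = M₂ * F := by
      rw [hM₂def, Matrix.mul_add, Matrix.add_mul, Matrix.mul_smul, Matrix.smul_mul,
        Matrix.mul_one, Matrix.one_mul, hFW]
    have hFM₁' : F * M₁' = M₁' * F := by
      rw [hM₁'def]
      rw [Matrix.mul_add, Matrix.mul_add, Matrix.add_mul, Matrix.add_mul]
      rw [Matrix.mul_smul, Matrix.mul_smul, Matrix.mul_smul, Matrix.smul_mul, Matrix.smul_mul,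
        Matrix.smul_mul]
      rw [← Matrix.mul_assoc, hF1F, Matrix.zero_mul]
      rw [Matrix.mul_assoc, ← hFM₁, ← Matrix.mul_assoc, h1FF, Matrix.zero_mul]
      rw [hFF, Matrix.mul_one, Matrix.one_mul]
    have hFM₂' : F * M₂' = M₂' * F := by
      rw [hM₂'def]
      rw [Matrix.mul_add, Matrix.mul_add, Matrix.add_mul, Matrix.add_mul]
      rw [Matrix.mul_smul, Matrix.mul_smul, Matrix.mul_smul, Matrix.smul_mul, Matrix.smul_mul,
        Matrix.smul_mul]
      rw [← Matrix.mul_assoc, hFF]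
      rw [Matrix.mul_assoc, ← hFM₂, ← Matrix.mul_assoc, hFF]
      rw [hF1F, h1FF, Matrix.mul_one, Matrix.one_mul]
    -- triangularity of auxiliaries
    have h1tri : (1 : Matrix (Fin k) (Fin k) R).BlockTriangular id := Matrix.blockTriangular_one
    have hM₁tri : M₁.BlockTriangular id := (tri_smul _ h1tri).sub hWtri
    have hM₂tri : M₂.BlockTriangular id := (tri_smul _ h1tri).add hWtri
    have h1Ftri : ((1 : Matrix (Fin k) (Fin k) R) - F).BlockTriangular id := h1tri.sub hFtri
    have hM₁'tri : M₁'.BlockTriangular id :=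
      ((tri_smul _ (h1Ftri.mul hM₁tri)).add (tri_smul _ hFtri)).add (tri_smul _ h1tri)
    have hM₂'tri : M₂'.BlockTriangular id :=
      ((tri_smul _ (hFtri.mul hM₂tri)).add (tri_smul _ h1Ftri)).add (tri_smul _ h1tri)
    -- diagonal entries are units
    have hM₁'diag : ∀ i, IsUnit (M₁' i i) := by
      intro i
      have hval : M₁' i i
          = e0 * ((1 - e i.succ) * (1 + u0 - (a i.succ - e i.succ))) + e0 * e i.succ + (1 - e0) := by
        rw [hM₁'def]
        simp only [Matrix.add_apply, Matrix.smul_apply, smul_eq_mul]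
        rw [diag_mul h1Ftri hM₁tri i, hM₁def]
        simp only [Matrix.sub_apply, Matrix.one_apply_eq, Matrix.smul_apply, smul_eq_mul,
          hFdiag i, hWdiag i, mul_one]
      rw [hval]
      apply unit_aux he0 (he i.succ)
      intro p hp hep hfp hcp
      apply hP 0 i.succ p hp (by rw [← he0def]; exact hep) hfp
      have h1e : (1 : R) - e0 ∈ p := by
        rcases idem_cases hp he0 with h | h
        · exact absurd h hep
        · exact h
      have := p.sub_mem hcp (p.add_mem h1e hfp)
      exact mem_congr this (by rw [hu0def]; ring)
    have hM₂'diag : ∀ i, IsUnit (M₂' i i) := by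
      intro i
      have hval : M₂' i i
          = (1 - e0) * ((1 - (1 - e i.succ)) * (1 - u0 + (a i.succ - e i.succ)))
            + (1 - e0) * (1 - e i.succ) + (1 - (1 - e0)) := by
        rw [hM₂'def]
        simp only [Matrix.add_apply, Matrix.smul_apply, smul_eq_mul]
        rw [diag_mul hFtri hM₂tri i, hM₂def]
        simp only [Matrix.add_apply, Matrix.sub_apply, Matrix.one_apply_eq, Matrix.smul_apply,
          smul_eq_mul, hFdiag i, hWdiag i, mul_one]
        ring
      rw [hval]
      apply unit_aux he0.one_sub (he i.succ).one_sub
      intro p hp hep hfp hcp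
      have he0p : e0 ∈ p := by
        rcases idem_cases hp he0 with h | h
        · exact h
        · exact absurd h hep
      have hesp : e i.succ ∉ p := fun h =>
        one_not_mem hp (mem_congr (p.add_mem h hfp) (by ring))
      apply hP i.succ 0 p hp hesp (by rw [← he0def]; exact he0p)
      have h1es : (1 : R) - e i.succ ∈ p := hfp
      have := p.sub_mem hcp (p.add_mem h1es he0p)
      exact mem_congr this (by rw [hu0def]; ring)
    -- inverses
    have hM₁'det : IsUnit M₁'.det := by
      rw [Matrix.det_of_upperTriangular hM₁'tri]
      exact Finset.prod_induction _ _ (fun x y hx hy => hx.mul hy) isUnit_one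
        (fun i _ => hM₁'diag i)
    have hM₂'det : IsUnit M₂'.det := by
      rw [Matrix.det_of_upperTriangular hM₂'tri]
      exact Finset.prod_induction _ _ (fun x y hx hy => hx.mul hy) isUnit_one
        (fun i _ => hM₂'diag i)
    set N₁ : Matrix (Fin k) (Fin k) R := M₁'⁻¹ with hN₁def
    set N₂ : Matrix (Fin k) (Fin k) R := M₂'⁻¹ with hN₂def
    have hN₁r : M₁' * N₁ = 1 := Matrix.mul_nonsing_inv _ hM₁'det
    have hN₁l : N₁ * M₁' = 1 := Matrix.nonsing_inv_mul _ hM₁'det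
    have hN₂r : M₂' * N₂ = 1 := Matrix.mul_nonsing_inv _ hM₂'det
    have hN₂l : N₂ * M₂' = 1 := Matrix.nonsing_inv_mul _ hM₂'det
    have hFN₁ : F * N₁ = N₁ * F := by
      calc F * N₁ = (N₁ * M₁') * (F * N₁) := by rw [hN₁l, one_mul]
        _ = N₁ * ((F * M₁') * N₁) := by rw [mul_assoc, ← mul_assoc M₁' F N₁, ← hFM₁', mul_assoc]
        _ = N₁ * F := by rw [mul_assoc, hN₁r, mul_one]
    have hFN₂ : F * N₂ = N₂ * F := by
      calc F * N₂ = (N₂ * M₂') * (F * N₂) := by rw [hN₂l, one_mul]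
        _ = N₂ * ((F * M₂') * N₂) := by rw [mul_assoc, ← mul_assoc M₂' F N₂, ← hFM₂', mul_assoc]
        _ = N₂ * F := by rw [mul_assoc, hN₂r, mul_one]
    -- vector data
    obtain ⟨v0, hv0⟩ := hu0.exists_right_inv
    set b : Fin k → R := fun j => A 0 j.succ with hbdef
    set c₁ : Fin k → R := e0 • (b - b ᵥ* F) with hc₁def
    set c₂ : Fin k → R := (1 - e0) • (b ᵥ* F) with hc₂def
    set x₁ : Fin k → R := c₁ ᵥ* N₁ with hx₁def
    set x₂ : Fin k → R := c₂ ᵥ* N₂ with hx₂def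
    set x : Fin k → R := fun j => x₁ j + x₂ j with hxdef
    set y : Fin k → R := fun j => b j - x j with hydef
    have papp : ∀ (v : Fin k → R) (M : Matrix (Fin k) (Fin k) R) (j : Fin k),
        (v ᵥ* M) j = ∑ i, v i * M i j := fun v M j => by
      simp [Matrix.vecMul, dotProduct]
    have hc₁F : c₁ ᵥ* F = 0 := by
      rw [hc₁def, Matrix.smul_vecMul, Matrix.sub_vecMul, Matrix.vecMul_vecMul, hFF, sub_self,
        smul_zero]
    have hc₂F : c₂ ᵥ* F = c₂ := by
      rw [hc₂def, Matrix.smul_vecMul, Matrix.vecMul_vecMul, hFF]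
    have hx₁F : x₁ ᵥ* F = 0 := by
      rw [hx₁def, Matrix.vecMul_vecMul, ← hFN₁, ← Matrix.vecMul_vecMul, hc₁F, Matrix.zero_vecMul]
    have hx₂F : x₂ ᵥ* F = x₂ := by
      rw [hx₂def, Matrix.vecMul_vecMul, ← hFN₂, ← Matrix.vecMul_vecMul, hc₂F]
    have he0c₁ : e0 • c₁ = c₁ := by rw [hc₁def, smul_smul, he0.eq]
    have hex₁ : e0 • x₁ = x₁ := by rw [hx₁def, ← Matrix.smul_vecMul, he0c₁]
    have hex₂ : e0 • x₂ = 0 := by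
      have h00 : e0 * (1 - e0) = 0 := by rw [mul_sub, mul_one, he0.eq, sub_self]
      rw [hx₂def, ← Matrix.smul_vecMul, hc₂def, smul_smul, h00, zero_smul, Matrix.zero_vecMul]
    have hx₁M₁ : x₁ ᵥ* M₁ = c₁ := by
      have h1 : x₁ ᵥ* M₁' = c₁ := by rw [hx₁def, Matrix.vecMul_vecMul, hN₁l, Matrix.vecMul_one]
      have t1 : x₁ ᵥ* (e0 • ((1 - F) * M₁)) = x₁ ᵥ* M₁ := by
        rw [vecMul_smul_mat, ← Matrix.vecMul_vecMul, Matrix.vecMul_sub 1 F x₁,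
          Matrix.vecMul_one, hx₁F, sub_zero, ← Matrix.smul_vecMul, hex₁]
      have t2 : x₁ ᵥ* (e0 • F) = 0 := by rw [vecMul_smul_mat, hx₁F, smul_zero]
      have t3 : x₁ ᵥ* ((1 - e0) • (1 : Matrix (Fin k) (Fin k) R)) = 0 := by
        rw [vecMul_smul_mat, Matrix.vecMul_one, sub_smul, one_smul, hex₁, sub_self]
      have h2 : x₁ ᵥ* M₁' = x₁ ᵥ* M₁ := by
        rw [hM₁'def, Matrix.vecMul_add, Matrix.vecMul_add, t1, t2, t3, add_zero, add_zero]
      rw [← h2, h1]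
    have hx₂M₂ : x₂ ᵥ* M₂ = c₂ := by
      have h1 : x₂ ᵥ* M₂' = c₂ := by rw [hx₂def, Matrix.vecMul_vecMul, hN₂l, Matrix.vecMul_one]
      have hsub : (1 - e0) • x₂ = x₂ := by rw [sub_smul, one_smul, hex₂, sub_zero]
      have s1 : x₂ ᵥ* ((1 - e0) • (F * M₂)) = x₂ ᵥ* M₂ := by
        rw [vecMul_smul_mat, ← Matrix.vecMul_vecMul, hx₂F, ← Matrix.smul_vecMul, hsub]
      have s2 : x₂ ᵥ* ((1 - e0) • ((1 : Matrix (Fin k) (Fin k) R) - F)) = 0 := by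
        rw [vecMul_smul_mat, Matrix.vecMul_sub 1 F x₂, Matrix.vecMul_one, hx₂F, sub_self,
          smul_zero]
      have s3 : x₂ ᵥ* (e0 • (1 : Matrix (Fin k) (Fin k) R)) = 0 := by
        rw [vecMul_smul_mat, Matrix.vecMul_one, hex₂]
      have h2 : x₂ ᵥ* M₂' = x₂ ᵥ* M₂ := by
        rw [hM₂'def, Matrix.vecMul_add, Matrix.vecMul_add, s1, s2, s3, add_zero, add_zero]
      rw [← h2, h1]
    have hx₁W : x₁ ᵥ* W = (1 + u0) • x₁ - c₁ := by
      have h := hx₁M₁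
      rw [hM₁def, Matrix.vecMul_sub, vecMul_smul_mat, Matrix.vecMul_one] at h
      rw [← h, sub_sub_cancel]
    have hx₂W : x₂ ᵥ* W = c₂ - (1 - u0) • x₂ := by
      have h := hx₂M₂
      rw [hM₂def, Matrix.vecMul_add, vecMul_smul_mat, Matrix.vecMul_one] at h
      rw [← h, add_sub_cancel_left]
    -- pointwise facts
    have pf1 : ∀ j, (∑ i, x₁ i * F i j) = 0 := fun j => by
      rw [← papp x₁ F j, hx₁F]; rfl
    have pf2 : ∀ j, (∑ i, x₂ i * F i j) = x₂ j := fun j => by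
      rw [← papp x₂ F j, hx₂F]
    have pf3 : ∀ j, e0 * x₁ j = x₁ j := fun j => by
      have := congrFun hex₁ j; simpa using this
    have pf4 : ∀ j, e0 * x₂ j = 0 := fun j => by
      have := congrFun hex₂ j; simpa using this
    have pf5 : ∀ j, (∑ i, x₁ i * W i j)
        = (1 + u0) * x₁ j - e0 * (b j - ∑ i, b i * F i j) := fun j => by
      rw [← papp x₁ W j, congrFun hx₁W j]
      simp only [hc₁def, Pi.sub_apply, Pi.smul_apply, smul_eq_mul, papp b F j]
    have pf6 : ∀ j, (∑ i, x₂ i * W i j)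
        = (1 - e0) * (∑ i, b i * F i j) - (1 - u0) * x₂ j := fun j => by
      rw [← papp x₂ W j, congrFun hx₂W j]
      simp only [hc₂def, Pi.sub_apply, Pi.smul_apply, smul_eq_mul, papp b F j]
    -- the inverse row for V
    set z : Fin k → R := (-v0) • (y ᵥ* V') with hzdef
    have hzW : z ᵥ* W = (-v0) • y := by
      rw [hzdef, Matrix.smul_vecMul, Matrix.vecMul_vecMul, hVW, Matrix.vecMul_one]
    have pz : ∀ j, (∑ i, z i * W i j) = -(v0 * y j) := fun j => by
      rw [← papp z W j, congrFun hzW j]; simp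
    have pzdef : ∀ j, z j = -(v0 * ∑ i, y i * V' i j) := fun j => by
      rw [hzdef]; simp [papp y V' j]
    -- the block matrices
    set E : Matrix (Fin (k+1)) (Fin (k+1)) R :=
      Matrix.of (Fin.cons (Fin.cons e0 x) (fun i => Fin.cons 0 (fun j => F i j))) with hEdef
    set U : Matrix (Fin (k+1)) (Fin (k+1)) R :=
      Matrix.of (Fin.cons (Fin.cons u0 y) (fun i => Fin.cons 0 (fun j => W i j))) with hUdef
    set V : Matrix (Fin (k+1)) (Fin (k+1)) R :=
      Matrix.of (Fin.cons (Fin.cons v0 z) (fun i => Fin.cons 0 (fun j => V' i j))) with hVdef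
    refine ⟨E, U, V, ?_, ?_, ?_, ?_, ?_, ?_, ?_, ?_, ?_⟩
    · -- E triangular
      intro i j hij
      rcases Fin.eq_zero_or_eq_succ i with rfl | ⟨i', rfl⟩
      · exact absurd hij (Fin.not_lt_zero j)
      · rcases Fin.eq_zero_or_eq_succ j with rfl | ⟨j', rfl⟩
        · simp [hEdef]
        · have hlt : j' < i' := Fin.succ_lt_succ_iff.mp hij
          simp [hEdef, hFtri hlt]
    · -- U triangular
      intro i j hij
      rcases Fin.eq_zero_or_eq_succ i with rfl | ⟨i', rfl⟩
      · exact absurd hij (Fin.not_lt_zero j)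
      · rcases Fin.eq_zero_or_eq_succ j with rfl | ⟨j', rfl⟩
        · simp [hUdef]
        · have hlt : j' < i' := Fin.succ_lt_succ_iff.mp hij
          simp [hUdef, hWtri hlt]
    · -- V triangular
      intro i j hij
      rcases Fin.eq_zero_or_eq_succ i with rfl | ⟨i', rfl⟩
      · exact absurd hij (Fin.not_lt_zero j)
      · rcases Fin.eq_zero_or_eq_succ j with rfl | ⟨j', rfl⟩
        · simp [hVdef]
        · have hlt : j' < i' := Fin.succ_lt_succ_iff.mp hij
          simp [hVdef, hV'tri hlt]
    · -- E * E = E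
      ext i j
      rw [Matrix.mul_apply, Fin.sum_univ_succ]
      rcases Fin.eq_zero_or_eq_succ i with rfl | ⟨i', rfl⟩
      · rcases Fin.eq_zero_or_eq_succ j with rfl | ⟨j', rfl⟩
        · simp [hEdef, he0.eq]
        · simp only [hEdef, Matrix.of_apply, Fin.cons_zero, Fin.cons_succ]
          simp only [hxdef, add_mul, Finset.sum_add_distrib]
          linear_combination pf3 j' + pf4 j' + pf1 j' + pf2 j'
      · rcases Fin.eq_zero_or_eq_succ j with rfl | ⟨j', rfl⟩
        · simp [hEdef]
        · have h := congrFun (congrFun hFF i') j'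
          rw [Matrix.mul_apply] at h
          simp [hEdef, h]
    · -- U * V = 1
      ext i j
      rw [Matrix.mul_apply, Fin.sum_univ_succ]
      rcases Fin.eq_zero_or_eq_succ i with rfl | ⟨i', rfl⟩
      · rcases Fin.eq_zero_or_eq_succ j with rfl | ⟨j', rfl⟩
        · simp [hUdef, hVdef, hv0, Matrix.one_apply]
        · simp only [hUdef, hVdef, Matrix.of_apply, Fin.cons_zero, Fin.cons_succ,
            Matrix.one_apply_ne (Fin.succ_ne_zero j').symm]
          rw [pzdef j']
          linear_combination (-(∑ i, y i * V' i j')) * hv0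
      · rcases Fin.eq_zero_or_eq_succ j with rfl | ⟨j', rfl⟩
        · simp [hUdef, hVdef, Matrix.one_apply, Fin.succ_ne_zero]
        · have h := congrFun (congrFun hWV i') j'
          rw [Matrix.mul_apply] at h
          simp [hUdef, hVdef, h, Matrix.one_apply, Fin.succ_inj]
    · -- V * U = 1
      ext i j
      rw [Matrix.mul_apply, Fin.sum_univ_succ]
      rcases Fin.eq_zero_or_eq_succ i with rfl | ⟨i', rfl⟩
      · rcases Fin.eq_zero_or_eq_succ j with rfl | ⟨j', rfl⟩
        · simp only [hUdef, hVdef, Matrix.of_apply, Fin.cons_zero, Fin.cons_succ,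
            Matrix.one_apply_eq]
          simp [mul_comm v0 u0, hv0]
        · simp only [hUdef, hVdef, Matrix.of_apply, Fin.cons_zero, Fin.cons_succ,
            Matrix.one_apply_ne (Fin.succ_ne_zero j').symm]
          rw [pz j']
          ring
      · rcases Fin.eq_zero_or_eq_succ j with rfl | ⟨j', rfl⟩
        · simp [hUdef, hVdef, Matrix.one_apply, Fin.succ_ne_zero]
        · have h := congrFun (congrFun hVW i') j'
          rw [Matrix.mul_apply] at h
          simp [hUdef, hVdef, h, Matrix.one_apply, Fin.succ_inj]
    · -- A = E + U
      ext i j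
      rcases Fin.eq_zero_or_eq_succ i with rfl | ⟨i', rfl⟩
      · rcases Fin.eq_zero_or_eq_succ j with rfl | ⟨j', rfl⟩
        · simp only [hEdef, hUdef, Matrix.add_apply, Matrix.of_apply, Fin.cons_zero]
          rw [hdiag 0, hu0def, he0def]
          ring
        · simp only [hEdef, hUdef, Matrix.add_apply, Matrix.of_apply, Fin.cons_zero,
            Fin.cons_succ, hydef, hbdef]
          ring
      · rcases Fin.eq_zero_or_eq_succ j with rfl | ⟨j', rfl⟩
        · have h0 : A i'.succ 0 = 0 := hA (Fin.succ_pos i')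
          simp [hEdef, hUdef, h0]
        · have h := congrFun (congrFun hDFW i') j'
          rw [hDdef] at h
          simp only [Matrix.add_apply, Matrix.of_apply] at h
          simp [hEdef, hUdef, h]
    · -- E * U = U * E
      ext i j
      rw [Matrix.mul_apply, Matrix.mul_apply, Fin.sum_univ_succ, Fin.sum_univ_succ]
      rcases Fin.eq_zero_or_eq_succ i with rfl | ⟨i', rfl⟩
      · rcases Fin.eq_zero_or_eq_succ j with rfl | ⟨j', rfl⟩
        · simp [hEdef, hUdef, mul_comm]
        · simp only [hEdef, hUdef, Matrix.of_apply, Fin.cons_zero, Fin.cons_succ]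
          simp only [hydef, hxdef, sub_mul, add_mul, Finset.sum_sub_distrib,
            Finset.sum_add_distrib]
          linear_combination pf5 j' + pf6 j' - pf3 j' - pf4 j' + pf1 j' + pf2 j'
      · rcases Fin.eq_zero_or_eq_succ j with rfl | ⟨j', rfl⟩
        · simp [hEdef, hUdef]
        · have h := congrFun (congrFun hFW i') j'
          rw [Matrix.mul_apply, Matrix.mul_apply] at h
          simp only [hEdef, hUdef, Matrix.of_apply, Fin.cons_zero, Fin.cons_succ, zero_mul]
          simpa using h
    · -- diagonal of E
      intro i
      rcases Fin.eq_zero_or_eq_succ i with rfl | ⟨i', rfl⟩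
      · simp [hEdef, he0def]
      · simp [hEdef, hFdiag i']

end Main


/-- Over a commutative clean ring `R`, the ring of upper triangular `n × n` matrices is
strongly clean: every upper triangular matrix is the sum of an upper triangular idempotent
and an upper triangular unit (with upper triangular inverse) which commute. -/
theorem triangularMatrix_stronglyClean {R : Type*} [CommRing R] (hR : IsCleanRing R)
    {n : ℕ} (hn : 2 ≤ n) (A : Matrix (Fin n) (Fin n) R) (hA : ∀ i j : Fin n, j < i → A i j = 0) :
    ∃ E U V : Matrix (Fin n) (Fin n) R,
      (∀ i j : Fin n, j < i → E i j = 0) ∧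
      (∀ i j : Fin n, j < i → U i j = 0) ∧
      (∀ i j : Fin n, j < i → V i j = 0) ∧
      E * E = E ∧ U * V = 1 ∧ V * U = 1 ∧ A = E + U ∧ E * U = U * E := by
  obtain ⟨e, he, hu, hP⟩ := coherent_family hR n (fun i => A i i)
  obtain ⟨E, U, V, hEtri, hUtri, hVtri, hEE, hUV, hVU, hAEU, hEUc, -⟩ :=
    tri_ind n (fun i => A i i) e he hu hP A (fun i j h => hA i j h) (fun i => rfl)
  exact ⟨E, U, V, fun i j h => hEtri h, fun i j h => hUtri h, fun i j h => hVtri h,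
    hEE, hUV, hVU, hAEU, hEUc⟩
end

section
/- Let R be a commutative ring with Jacobson radical J(R). The following are equivalent: (1) R is clean and for every prime ideal 𝔭 of R, the Jacobson radical of the Pierce stalk R/I(𝔭) equals the image of J(R) under the quotient map R → R/I(𝔭); (2) for every r ∈ R there is an idempotent e ∈ R such that re + (1−e) is a unit of R and r(1−e) ∈ J(R); (3) the quotient ring R/J(R) is von Neumann regular (for every a there is b with aba = a) and idempotents lift uniquely modulo J(R), i.e., for every a ∈ R with a² − a ∈ J(R) there is a unique idempotent e ∈ R with e − a ∈ J(R). -/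
/-!
Modulo `J = J(R)`, condition (2) says that every `r` is congruent to `u * e` with `u` a unit and
`e` an idempotent of `R`. In a commutative ring the products `u * e` are exactly the von Neumann
regular elements, and an idempotent of the form `u * e` equals `e`; since idempotents congruent
modulo `J` coincide, this gives (2) ⇔ (3).

For (2) ⇒ (1), such a decomposition makes `r - (1 - e)` a unit, so `R` is clean. The Pierce
stalks of a clean ring have only the trivial idempotents, hence are local, and in a stalk the image
of `e` is `0` or `1`, which puts every nonunit into the image of `J`.

For (1) ⇒ (2), locality of the stalk at a prime `p` yields an idempotent `e ∉ p` with `e ∈ r R` or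
`r e ∈ J`. The joins `g ⊔ h` of idempotents `g ∈ r R` and `h` with `r h ∈ J` form a `⊔`-closed
family lying in no maximal ideal, so it contains `1`, and `g ⊔ h = 1` makes `g` the idempotent
required in (2).
-/

open Ideal

theorem SupClosed.image2_sup {α : Type*} [SemilatticeSup α] {s t : Set α} (hs : SupClosed s)
    (ht : SupClosed t) : SupClosed (Set.image2 (· ⊔ ·) s t) := by
  rintro _ ⟨a, ha, b, hb, rfl⟩ _ ⟨a', ha', b', hb', rfl⟩
  exact ⟨a ⊔ a', hs ha ha', b ⊔ b', ht hb hb', sup_sup_sup_comm a a' b b'⟩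

theorem IsCleanRing.of_surjective {R S : Type*} [Ring R] [Ring S] (h : IsCleanRing R)
    {f : R →+* S} (hf : Function.Surjective f) : IsCleanRing S := by
  intro b
  obtain ⟨a, rfl⟩ := hf b
  obtain ⟨e, u, he, hu, rfl⟩ := h a
  exact ⟨f e, f u, he.map f, hu.map f, map_add f e u⟩

theorem IsCleanRing.isLocalRing {R : Type*} [Ring R] [Nontrivial R] (h : IsCleanRing R)
    (hidem : ∀ e : R, IsIdempotentElem e → e = 0 ∨ e = 1) : IsLocalRing R := by
  refine .of_isUnit_or_isUnit_one_sub_self fun a => ?_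
  obtain ⟨e, u, he, hu, rfl⟩ := h a
  rcases hidem e he with rfl | rfl
  · exact .inl (by simpa using hu)
  · exact .inr (by simpa using hu.neg)

section

variable {R : Type*} [CommRing R]

theorem IsIdempotentElem.isUnit_mul_add_one_sub {e u : R} (he : IsIdempotentElem e)
    (hu : IsUnit u) : IsUnit (u * e + (1 - e)) := by
  obtain ⟨u, rfl⟩ := hu
  refine .of_mul_eq_one (↑u⁻¹ * e + (1 - e)) ?_
  linear_combination (e * e) * u.mul_inv + (2 - u - ↑u⁻¹) * he.eq

theorem IsIdempotentElem.eq_of_eq_mul {a e u : R} (ha : IsIdempotentElem a)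
    (he : IsIdempotentElem e) (hu : IsUnit u) (h : a = u * e) : a = e := by
  have : u * (u * e) = u * e := by linear_combination ha.eq + (1 - a - u * e) * h - u ^ 2 * he.eq
  rw [h, hu.mul_left_cancel this]

theorem exists_mul_mul_eq_self_iff {x : R} :
    (∃ b, x * b * x = x) ↔ ∃ u e, IsUnit u ∧ IsIdempotentElem e ∧ x = u * e := by
  constructor
  · rintro ⟨b, hb⟩
    have hx : x * (x * b) = x := by linear_combination hb
    have he : IsIdempotentElem (x * b) := by
      rw [IsIdempotentElem]; linear_combination b * hb
    have hunit : (x + (1 - x * b)) * (b * (x * b) + (1 - x * b)) = 1 := by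
      linear_combination (2 - b) * he.eq - hx
    exact ⟨x + (1 - x * b), x * b, .of_mul_eq_one _ hunit, he,
      by linear_combination he.eq - hx⟩
  · rintro ⟨_, e, ⟨u, rfl⟩, he, rfl⟩
    exact ⟨↑u⁻¹, by linear_combination (u * e * e) * u.mul_inv + (u : R) * he.eq⟩

instance : IsLocalHom (Ideal.Quotient.mk (jacobson (⊥ : Ideal R))) :=
  isLocalHom_of_le_jacobson_bot _ le_rfl

theorem isUnit_add_of_mem_jacobson_bot {u j : R} (hu : IsUnit u) (hj : j ∈ jacobson ⊥) :
    IsUnit (u + j) := by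
  rw [← isUnit_map_iff (Ideal.Quotient.mk (jacobson ⊥)), map_add, Quotient.eq_zero_iff_mem.mpr hj,
    add_zero]
  exact hu.map _

theorem IsIdempotentElem.eq_zero_of_mem_jacobson_bot {e : R} (he : IsIdempotentElem e)
    (h : e ∈ jacobson ⊥) : e = 0 := by
  have hunit : IsUnit (1 - e) := by simpa [sub_eq_neg_add] using mem_jacobson_bot.mp h (-1)
  exact (hunit.mul_left_eq_zero).mp he.mul_one_sub_self

theorem IsIdempotentElem.eq_of_sub_mem_jacobson_bot {e f : R} (he : IsIdempotentElem e)
    (hf : IsIdempotentElem f) (h : e - f ∈ jacobson ⊥) : e = f := by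
  have hef : e * (1 - f) = 0 := (he.mul hf.one_sub).eq_zero_of_mem_jacobson_bot <| by
    simpa [mul_sub, he.eq] using (jacobson ⊥).mul_mem_left e h
  have hfe : f * (1 - e) = 0 := (hf.mul he.one_sub).eq_zero_of_mem_jacobson_bot <| by
    simpa [mul_sub, hf.eq, mul_comm] using (jacobson ⊥).mul_mem_left (-f) h
  linear_combination hef - hfe

theorem map_jacobson_bot_le {S : Type*} [CommRing S] {f : R →+* S}
    (hf : Function.Surjective f) : (jacobson (⊥ : Ideal R)).map f ≤ jacobson ⊥ := by
  rw [map_le_iff_le_comap, comap_jacobson_of_surjective hf]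
  exact jacobson_mono bot_le

theorem isIdempotentElem_mk_iff {I : Ideal R} {a : R} :
    IsIdempotentElem (Ideal.Quotient.mk I a) ↔ a ^ 2 - a ∈ I := by
  rw [← Quotient.eq_zero_iff_mem, IsIdempotentElem, map_sub, map_pow, sq, sub_eq_zero]

theorem supClosed_setOf_mem (I : Ideal R) :
    SupClosed {e : {e : R // IsIdempotentElem e} | (e : R) ∈ I} := fun _ he _ hf =>
  I.sub_mem (I.add_mem he hf) (I.mul_mem_right _ he)

theorem exists_mul_eq_self_of_mem_span {s : Set {e : R // IsIdempotentElem e}}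
    (hs : SupClosed s) (hbot : ⊥ ∈ s) {x : R} (hx : x ∈ span (Subtype.val '' s)) :
    ∃ e ∈ s, x * e = x := by
  induction hx using Submodule.span_induction with
  | mem _ h => obtain ⟨e, he, rfl⟩ := h; exact ⟨e, he, e.2.eq⟩
  | zero => exact ⟨⊥, hbot, zero_mul _⟩
  | add x y _ _ hx hy =>
    obtain ⟨e, he, hxe⟩ := hx
    obtain ⟨f, hf, hyf⟩ := hy
    have hle : ∀ {a b : {e : R // IsIdempotentElem e}}, a ≤ b → (a : R) * b = a := id
    refine ⟨e ⊔ f, hs he hf, ?_⟩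
    rw [add_mul, ← hxe, ← hyf, mul_assoc, mul_assoc, hle le_sup_left, hle le_sup_right]
  | smul a x _ hx =>
    obtain ⟨e, he, hxe⟩ := hx
    exact ⟨e, he, by rw [smul_eq_mul, mul_assoc, hxe]⟩

theorem top_mem_of_forall_isMaximal {s : Set {e : R // IsIdempotentElem e}} (hs : SupClosed s)
    (hbot : ⊥ ∈ s) (h : ∀ m : Ideal R, m.IsMaximal → ∃ e ∈ s, (e : R) ∉ m) : ⊤ ∈ s := by
  have hspan : span (Subtype.val '' s) = ⊤ := by
    by_contra hne
    obtain ⟨m, hm, hle⟩ := exists_le_maximal _ hne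
    obtain ⟨e, he, hem⟩ := h m hm
    exact hem (hle (subset_span ⟨e, he, rfl⟩))
  obtain ⟨e, he, h1e⟩ :=
    exists_mul_eq_self_of_mem_span hs hbot (hspan ▸ Submodule.mem_top : (1 : R) ∈ _)
  rwa [show e = ⊤ from Subtype.ext ((one_mul _).symm.trans h1e)] at he

theorem exists_sup_eq_top_of_forall_isMaximal {I K : Ideal R}
    (hmax : ∀ m : Ideal R, m.IsMaximal →
      ∃ e : {e : R // IsIdempotentElem e}, (e : R) ∉ m ∧ ((e : R) ∈ I ∨ (e : R) ∈ K)) :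
    ∃ g h : {e : R // IsIdempotentElem e}, (g : R) ∈ I ∧ (h : R) ∈ K ∧ g ⊔ h = ⊤ := by
  obtain ⟨g, hg, h, hh, hgh⟩ := top_mem_of_forall_isMaximal
    ((supClosed_setOf_mem I).image2_sup (supClosed_setOf_mem K))
    ⟨⊥, I.zero_mem, ⊥, K.zero_mem, bot_sup_eq ⊥⟩ fun m hm => by
      obtain ⟨e, hem, heI | heK⟩ := hmax m hm
      · exact ⟨e, ⟨e, heI, ⊥, K.zero_mem, sup_bot_eq e⟩, hem⟩
      · exact ⟨e, ⟨⊥, I.zero_mem, e, heK, bot_sup_eq e⟩, hem⟩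
  exact ⟨g, h, hg, hh, hgh⟩

section Pierce

variable {p : Ideal R}

theorem mem_pierceIdeal_iff {x : R} :
    x ∈ pierceIdeal p ↔ ∃ e, IsIdempotentElem e ∧ e ∈ p ∧ x * e = x := by
  have hspan : pierceIdeal p =
      span (Subtype.val '' {e : {e : R // IsIdempotentElem e} | (e : R) ∈ p}) := by
    rw [pierceIdeal]; congr 1; ext e; simp [and_comm]
  refine ⟨fun hx => ?_, fun ⟨e, he, hep, hxe⟩ => hxe ▸ mul_mem_left _ _ (subset_span ⟨he, hep⟩)⟩
  obtain ⟨e, hep, hxe⟩ :=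
    exists_mul_eq_self_of_mem_span (supClosed_setOf_mem p) p.zero_mem (hspan ▸ hx)
  exact ⟨e, e.2, hep, hxe⟩

theorem pierceIdeal_le : pierceIdeal p ≤ p :=
  span_le.mpr fun _ he => he.2

theorem IsIdempotentElem.mem_pierceIdeal_or_one_sub_mem [p.IsPrime] {e : R}
    (he : IsIdempotentElem e) : e ∈ pierceIdeal p ∨ 1 - e ∈ pierceIdeal p := by
  have : e * (1 - e) ∈ p := he.mul_one_sub_self ▸ p.zero_mem
  exact (IsPrime.mem_or_mem ‹_› this).imp (fun h => subset_span ⟨he, h⟩)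
    (fun h => subset_span ⟨he.one_sub, h⟩)

theorem eq_zero_or_one_of_isIdempotentElem_quotient_pierceIdeal [p.IsPrime]
    {x : R ⧸ pierceIdeal p} (hx : IsIdempotentElem x) : x = 0 ∨ x = 1 := by
  obtain ⟨a, rfl⟩ := Ideal.Quotient.mk_surjective x
  obtain ⟨f, hf, hfp, haf⟩ := mem_pierceIdeal_iff.mp (isIdempotentElem_mk_iff.mp hx)
  have hg : IsIdempotentElem (a * (1 - f)) := by
    rw [IsIdempotentElem]; linear_combination -haf + a ^ 2 * hf.eq
  have hag : Ideal.Quotient.mk (pierceIdeal p) (a * (1 - f)) = Ideal.Quotient.mk _ a := by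
    rw [Ideal.Quotient.eq, show a * (1 - f) - a = -a * f by ring]
    exact mul_mem_left _ _ (subset_span ⟨hf, hfp⟩)
  rw [← hag]
  refine hg.mem_pierceIdeal_or_one_sub_mem.imp Ideal.Quotient.eq_zero_iff_mem.mpr fun h => ?_
  rw [← map_one (Ideal.Quotient.mk _), Ideal.Quotient.eq, ← neg_sub]
  exact neg_mem h

theorem pierceIdeal_ne_top [p.IsPrime] : pierceIdeal p ≠ ⊤ :=
  ne_top_of_le_ne_top IsPrime.ne_top' pierceIdeal_le

end Pierce

theorem IsCleanRing.isLocalRing_quotient_pierceIdeal (h : IsCleanRing R) (p : Ideal R)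
    [p.IsPrime] : IsLocalRing (R ⧸ pierceIdeal p) :=
  have : Nontrivial (R ⧸ pierceIdeal p) := Ideal.Quotient.nontrivial_iff.mpr pierceIdeal_ne_top
  (h.of_surjective Ideal.Quotient.mk_surjective).isLocalRing
    fun _ he => eq_zero_or_one_of_isIdempotentElem_quotient_pierceIdeal he

theorem exists_isUnit_mul_add_one_sub_iff (r : R) :
    (∃ e, IsIdempotentElem e ∧ IsUnit (r * e + (1 - e)) ∧ r * (1 - e) ∈ jacobson ⊥) ↔
      ∃ e u, IsIdempotentElem e ∧ IsUnit u ∧ r - u * e ∈ jacobson (⊥ : Ideal R) := by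
  constructor
  · rintro ⟨e, he, hu, hr⟩
    refine ⟨e, _, he, hu, ?_⟩
    rwa [show r - (r * e + (1 - e)) * e = r * (1 - e) by linear_combination (1 - r) * he.eq]
  · rintro ⟨e, u, he, hu, hr⟩
    refine ⟨e, he, ?_, ?_⟩
    · rw [show r * e + (1 - e) = u * e + (1 - e) + (r - u * e) * e by
        linear_combination u * he.eq]
      exact isUnit_add_of_mem_jacobson_bot (he.isUnit_mul_add_one_sub hu) (mul_mem_right _ _ hr)
    · rw [show r * (1 - e) = (r - u * e) * (1 - e) by linear_combination (-u) * he.eq]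
      exact mul_mem_right _ _ hr

section

variable (h : ∀ r : R, ∃ e u, IsIdempotentElem e ∧ IsUnit u ∧ r - u * e ∈ jacobson ⊥)
include h

theorem IsCleanRing.of_forall_exists_sub_mul_mem_jacobson : IsCleanRing R := by
  intro r
  obtain ⟨e, u, he, hu, hr⟩ := h r
  refine ⟨1 - e, r - (1 - e), he.one_sub, ?_, by ring⟩
  rw [show r - (1 - e) = -((-u) * e + (1 - e)) + (r - u * e) by ring]
  exact isUnit_add_of_mem_jacobson_bot (he.isUnit_mul_add_one_sub hu.neg).neg hr

theorem jacobson_quotient_pierceIdeal_eq_map (p : Ideal R) [p.IsPrime] :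
    jacobson (⊥ : Ideal (R ⧸ pierceIdeal p)) =
      (jacobson ⊥).map (Ideal.Quotient.mk (pierceIdeal p)) := by
  have := (IsCleanRing.of_forall_exists_sub_mul_mem_jacobson h).isLocalRing_quotient_pierceIdeal p
  have hle := map_jacobson_bot_le (Ideal.Quotient.mk_surjective (I := pierceIdeal p))
  refine le_antisymm (fun x hx => ?_) hle
  obtain ⟨r, rfl⟩ := Ideal.Quotient.mk_surjective x
  obtain ⟨e, u, he, hu, hr⟩ := h r
  have hr' := mem_map_of_mem (Ideal.Quotient.mk (pierceIdeal p)) hr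
  rw [map_sub, map_mul] at hr'
  rcases eq_zero_or_one_of_isIdempotentElem_quotient_pierceIdeal
    (he.map (Ideal.Quotient.mk (pierceIdeal p))) with he0 | he1
  · simpa [he0] using hr'
  · rw [he1, mul_one] at hr'
    have hu' : Ideal.Quotient.mk (pierceIdeal p) u ∈ jacobson ⊥ := by
      simpa using sub_mem hx (hle hr')
    rw [IsLocalRing.jacobson_eq_maximalIdeal ⊥ bot_ne_top] at hu'
    exact absurd (hu.map _) ((IsLocalRing.mem_maximalIdeal _).mp hu')

theorem exists_mul_mul_eq_self_quotient_jacobson (a : R ⧸ jacobson (⊥ : Ideal R)) :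
    ∃ b, a * b * a = a := by
  obtain ⟨r, rfl⟩ := Ideal.Quotient.mk_surjective a
  obtain ⟨e, u, he, hu, hr⟩ := h r
  refine exists_mul_mul_eq_self_iff.mpr ⟨_, _, hu.map (Ideal.Quotient.mk (jacobson ⊥)),
    he.map (Ideal.Quotient.mk (jacobson ⊥)), ?_⟩
  rw [← map_mul, Ideal.Quotient.eq]
  exact hr

theorem existsUnique_isIdempotentElem_sub_mem_jacobson {a : R} (ha : a ^ 2 - a ∈ jacobson ⊥) :
    ∃! e, IsIdempotentElem e ∧ e - a ∈ jacobson (⊥ : Ideal R) := by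
  obtain ⟨e, u, he, hu, hr⟩ := h a
  have hmk : Ideal.Quotient.mk (jacobson ⊥) a = Ideal.Quotient.mk _ u * Ideal.Quotient.mk _ e := by
    rw [← map_mul, Ideal.Quotient.eq]; exact hr
  have hea : e - a ∈ jacobson ⊥ := Ideal.Quotient.eq.mp
    ((isIdempotentElem_mk_iff.mpr ha).eq_of_eq_mul (he.map _) (hu.map _) hmk).symm
  refine ⟨e, ⟨he, hea⟩, fun f ⟨hf, hfa⟩ => hf.eq_of_sub_mem_jacobson_bot he ?_⟩
  simpa using sub_mem hfa hea

end

theorem exists_sub_mul_mem_jacobson_of_regular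
    (hreg : ∀ a : R ⧸ jacobson (⊥ : Ideal R), ∃ b, a * b * a = a)
    (hlift : ∀ a : R, a ^ 2 - a ∈ jacobson ⊥ → ∃ e, IsIdempotentElem e ∧ e - a ∈ jacobson ⊥)
    (r : R) : ∃ e u, IsIdempotentElem e ∧ IsUnit u ∧ r - u * e ∈ jacobson (⊥ : Ideal R) := by
  obtain ⟨v, ε, hv, hε, hr⟩ := exists_mul_mul_eq_self_iff.mp (hreg (Ideal.Quotient.mk _ r))
  obtain ⟨c, rfl⟩ := Ideal.Quotient.mk_surjective ε
  obtain ⟨u, rfl⟩ := Ideal.Quotient.mk_surjective v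
  obtain ⟨e, he, hec⟩ := hlift c (isIdempotentElem_mk_iff.mp hε)
  refine ⟨e, u, he, (isUnit_map_iff _ _).mp hv, ?_⟩
  rw [← Ideal.Quotient.eq, map_mul, Ideal.Quotient.eq.mpr hec, hr]

theorem exists_isIdempotentElem_notMem_of_jacobson_quotient_pierceIdeal_eq {p : Ideal R} [p.IsPrime]
    [IsLocalRing (R ⧸ pierceIdeal p)]
    (hp : jacobson (⊥ : Ideal (R ⧸ pierceIdeal p)) =
      (jacobson ⊥).map (Ideal.Quotient.mk (pierceIdeal p))) (r : R) :
    ∃ e : {e : R // IsIdempotentElem e}, (e : R) ∉ p ∧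
      ((e : R) ∈ span {r} ∨ (e : R) ∈ (jacobson (⊥ : Ideal R)).colon {r}) := by
  have hann : ∀ x ∈ pierceIdeal p,
      ∃ e : {e : R // IsIdempotentElem e}, (e : R) ∉ p ∧ x * e = 0 := by
    intro x hx
    obtain ⟨f, hf, hfp, hxf⟩ := mem_pierceIdeal_iff.mp hx
    refine ⟨⟨1 - f, hf.one_sub⟩, fun h => ‹p.IsPrime›.ne_top ?_, by linear_combination -hxf⟩
    exact (eq_top_iff_one _).mpr (by simpa using add_mem h hfp)
  by_cases hu : IsUnit (Ideal.Quotient.mk (pierceIdeal p) r)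
  · obtain ⟨y, hy⟩ := hu.exists_right_inv
    obtain ⟨s, rfl⟩ := Ideal.Quotient.mk_surjective y
    obtain ⟨e, hep, he⟩ := hann (r * s - 1) <| by
      rw [← Ideal.Quotient.eq_zero_iff_mem, map_sub, map_mul, hy, map_one, sub_self]
    exact ⟨e, hep, .inl (mem_span_singleton'.mpr ⟨s * e, by linear_combination he⟩)⟩
  · rw [← mem_nonunits_iff, ← IsLocalRing.mem_maximalIdeal,
      ← IsLocalRing.jacobson_eq_maximalIdeal ⊥ bot_ne_top, hp,
      mem_map_iff_of_surjective _ Ideal.Quotient.mk_surjective] at hu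
    obtain ⟨j, hj, hjr⟩ := hu
    obtain ⟨e, hep, he⟩ := hann (r - j) (Ideal.Quotient.eq.mp hjr.symm)
    refine ⟨e, hep, .inr (Submodule.mem_colon_singleton.mpr ?_)⟩
    rw [smul_eq_mul, show (e : R) * r = e * j by linear_combination he]
    exact mul_mem_left _ _ hj

theorem exists_isUnit_mul_add_one_sub_of_forall_isMaximal (r : R)
    (hmax : ∀ m : Ideal R, m.IsMaximal → ∃ e : {e : R // IsIdempotentElem e}, (e : R) ∉ m ∧
      ((e : R) ∈ span {r} ∨ (e : R) ∈ (jacobson (⊥ : Ideal R)).colon {r})) :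
    ∃ e, IsIdempotentElem e ∧ IsUnit (r * e + (1 - e)) ∧ r * (1 - e) ∈ jacobson ⊥ := by
  obtain ⟨⟨g, hg⟩, ⟨h, _⟩, hgr, hhr, hgh⟩ := exists_sup_eq_top_of_forall_isMaximal hmax
  obtain ⟨s, rfl⟩ := mem_span_singleton'.mp hgr
  have hgh : s * r + h - s * r * h = 1 := congrArg Subtype.val hgh
  refine ⟨s * r, hg, .of_mul_eq_one (s * (s * r) + (1 - s * r)) ?_, ?_⟩
  · linear_combination (s * r + 2 - r - s) * hg.eq
  · rw [show r * (1 - s * r) = h * r * (1 - s * r) by linear_combination (-r) * hgh]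
    exact mul_mem_right _ _ (Submodule.mem_colon_singleton.mp hhr)

end

/-- Characterizations of commutative J-clean rings: `R` is clean with the Jacobson radical of
each Pierce stalk equal to the image of `J(R)`; iff each `r` admits an idempotent `e` with
`r e + (1 - e)` a unit and `r (1 - e) ∈ J(R)`; iff `R/J(R)` is von Neumann regular and
idempotents lift uniquely modulo `J(R)`. -/
theorem jClean_tfae {R : Type*} [CommRing R] :
    List.TFAE
      [IsCleanRing R ∧ ∀ p : Ideal R, p.IsPrime →
         Ideal.jacobson (⊥ : Ideal (R ⧸ pierceIdeal p)) =
           (Ideal.jacobson (⊥ : Ideal R)).map (Ideal.Quotient.mk (pierceIdeal p)),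
       ∀ r : R, ∃ e : R, IsIdempotentElem e ∧ IsUnit (r * e + (1 - e)) ∧
         r * (1 - e) ∈ Ideal.jacobson (⊥ : Ideal R),
       (∀ a : R ⧸ Ideal.jacobson (⊥ : Ideal R),
          ∃ b : R ⧸ Ideal.jacobson (⊥ : Ideal R), a * b * a = a) ∧
         ∀ a : R, a ^ 2 - a ∈ Ideal.jacobson (⊥ : Ideal R) →
           ∃! e : R, IsIdempotentElem e ∧ e - a ∈ Ideal.jacobson (⊥ : Ideal R)] := by
  have h2 := forall_congr' (exists_isUnit_mul_add_one_sub_iff (R := R))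
  tfae_have 1 → 2 := fun ⟨hclean, hstalk⟩ r =>
    exists_isUnit_mul_add_one_sub_of_forall_isMaximal r fun m hm =>
      have := hclean.isLocalRing_quotient_pierceIdeal m
      exists_isIdempotentElem_notMem_of_jacobson_quotient_pierceIdeal_eq (hstalk m hm.isPrime) r
  tfae_have 2 → 1 := fun h =>
    ⟨.of_forall_exists_sub_mul_mem_jacobson (h2.mp h),
      fun p _ => jacobson_quotient_pierceIdeal_eq_map (h2.mp h) p⟩
  tfae_have 2 → 3 := fun h =>
    ⟨exists_mul_mul_eq_self_quotient_jacobson (h2.mp h),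
      fun _ => existsUnique_isIdempotentElem_sub_mem_jacobson (h2.mp h)⟩
  tfae_have 3 → 2 := fun ⟨hreg, hlift⟩ =>
    h2.mpr (exists_sub_mul_mem_jacobson_of_regular hreg fun a ha => (hlift a ha).exists)
  tfae_finish
end
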